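/- arXiv:1803.03464 — 11 statements merged into one kernel-verified Lean document; each statement's English description precedes it below -/
import Mathlib

section
/- Let k1, k2 > 0 and set θ = k1/k2, a*(k1,k2,σ) = -sqrt(2·k2·σ²/(k1(k1+k2))), b*(k1,k2,σ) = sqrt(2·k1·σ²/(k2(k1+k2))). Then the elasticities satisfy (k1/a*)·∂a*/∂k1 = -(2θ+1)/(2(θ+1)), (k1/b*)·∂b*/∂k1 = 1/(2(θ+1)), (k2/a*)·∂a*/∂k2 = θ/(2(θ+1)), and (k2/b*)·∂b*/∂k2 = -(θ+2)/(2(θ+1)). -/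
open Real

noncomputable def astarFn (k1 k2 σ : ℝ) : ℝ :=
  -Real.sqrt (2 * k2 * σ ^ 2 / (k1 * (k1 + k2)))

noncomputable def bstarFn (k1 k2 σ : ℝ) : ℝ :=
  Real.sqrt (2 * k1 * σ ^ 2 / (k2 * (k1 + k2)))

lemma elas_pos (p F d : ℝ) (hF : 0 < F) :
    (p / Real.sqrt F) * (d / (2 * Real.sqrt F)) = p * d / (2 * F) := by
  rw [div_mul_div_comm,
    show Real.sqrt F * (2 * Real.sqrt F) = 2 * (Real.sqrt F * Real.sqrt F) by ring,
    Real.mul_self_sqrt hF.le]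

lemma elas_neg (p F d : ℝ) (hF : 0 < F) :
    (p / -Real.sqrt F) * -(d / (2 * Real.sqrt F)) = p * d / (2 * F) := by
  rw [div_neg, neg_mul_neg, elas_pos p F d hF]

theorem stmt1 (k1 k2 σ : ℝ) (hk1 : 0 < k1) (hk2 : 0 < k2) (hσ : 0 < σ)
    (θ : ℝ) (hθ : θ = k1 / k2) :
    (k1 / astarFn k1 k2 σ) * deriv (fun k => astarFn k k2 σ) k1
        = -(2 * θ + 1) / (2 * (θ + 1)) ∧
    (k1 / bstarFn k1 k2 σ) * deriv (fun k => bstarFn k k2 σ) k1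
        = 1 / (2 * (θ + 1)) ∧
    (k2 / astarFn k1 k2 σ) * deriv (fun k => astarFn k1 k σ) k2
        = θ / (2 * (θ + 1)) ∧
    (k2 / bstarFn k1 k2 σ) * deriv (fun k => bstarFn k1 k σ) k2
        = -(θ + 2) / (2 * (θ + 1)) := by
  subst hθ
  have hk12 : 0 < k1 + k2 := by linarith
  set Fa : ℝ := 2 * k2 * σ ^ 2 / (k1 * (k1 + k2)) with hFadef
  set Fb : ℝ := 2 * k1 * σ ^ 2 / (k2 * (k1 + k2)) with hFbdef
  have hFa : 0 < Fa := by rw [hFadef]; positivity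
  have hFb : 0 < Fb := by rw [hFbdef]; positivity
  set da1 : ℝ := (0 * (k1 * (k1 + k2)) - 2 * k2 * σ ^ 2 * (1 * (k1 + k2) + k1 * 1))
      / (k1 * (k1 + k2)) ^ 2 with hda1
  set db1 : ℝ := (2 * 1 * σ ^ 2 * (k2 * (k1 + k2)) - 2 * k1 * σ ^ 2 * (k2 * (0 + 1)))
      / (k2 * (k1 + k2)) ^ 2 with hdb1
  set da2 : ℝ := (2 * 1 * σ ^ 2 * (k1 * (k1 + k2)) - 2 * k2 * σ ^ 2 * (k1 * (0 + 1)))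
      / (k1 * (k1 + k2)) ^ 2 with hda2
  set db2 : ℝ := (0 * (k2 * (k1 + k2)) - 2 * k1 * σ ^ 2 * (1 * (k1 + k2) + k2 * 1))
      / (k2 * (k1 + k2)) ^ 2 with hdb2
  have hs1 : HasDerivAt (fun k => astarFn k k2 σ) (-(da1 / (2 * Real.sqrt Fa))) k1 := by
    simp only [astarFn]
    exact (((hasDerivAt_const k1 (2 * k2 * σ ^ 2)).div
      ((hasDerivAt_id k1).mul ((hasDerivAt_id k1).add_const k2))
      (by show k1 * (k1 + k2) ≠ 0; positivity)).sqrt hFa.ne').neg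
  have hs2 : HasDerivAt (fun k => bstarFn k k2 σ) (db1 / (2 * Real.sqrt Fb)) k1 := by
    simp only [bstarFn]
    have hn : HasDerivAt (fun k : ℝ => 2 * k * σ ^ 2) (2 * 1 * σ ^ 2) k1 :=
      ((hasDerivAt_id k1).const_mul 2).mul_const (σ ^ 2)
    have hd : HasDerivAt (fun k : ℝ => k2 * (k + k2)) (k2 * (0 + 1)) k1 := by
      have : HasDerivAt (fun k : ℝ => k + k2) (0 + 1) k1 := by
        simpa using ((hasDerivAt_id k1).add_const k2).congr_deriv (by norm_num)
      exact this.const_mul k2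
    exact (hn.div hd (by positivity)).sqrt hFb.ne'
  have hs3 : HasDerivAt (fun k => astarFn k1 k σ) (-(da2 / (2 * Real.sqrt Fa))) k2 := by
    simp only [astarFn]
    have hn : HasDerivAt (fun k : ℝ => 2 * k * σ ^ 2) (2 * 1 * σ ^ 2) k2 :=
      ((hasDerivAt_id k2).const_mul 2).mul_const (σ ^ 2)
    have hd : HasDerivAt (fun k : ℝ => k1 * (k1 + k)) (k1 * (0 + 1)) k2 :=
      ((hasDerivAt_const k2 k1).add (hasDerivAt_id k2)).const_mul k1
    exact ((hn.div hd (by positivity)).sqrt hFa.ne').neg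
  have hs4 : HasDerivAt (fun k => bstarFn k1 k σ) (db2 / (2 * Real.sqrt Fb)) k2 := by
    simp only [bstarFn]
    have hd : HasDerivAt (fun k : ℝ => k * (k1 + k)) (1 * (k1 + k2) + k2 * 1) k2 := by
      have := (hasDerivAt_id k2).mul ((hasDerivAt_const k2 k1).add (hasDerivAt_id k2))
      exact this.congr_deriv (by simp)
    exact ((hasDerivAt_const k2 (2 * k1 * σ ^ 2)).div hd (by positivity)).sqrt hFb.ne'
  have ea : astarFn k1 k2 σ = -Real.sqrt Fa := rfl
  have eb : bstarFn k1 k2 σ = Real.sqrt Fb := rfl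
  rw [hs1.deriv, hs2.deriv, hs3.deriv, hs4.deriv, ea, eb]
  rw [elas_neg k1 Fa da1 hFa, elas_pos k1 Fb db1 hFb, elas_neg k2 Fa da2 hFa,
    elas_pos k2 Fb db2 hFb]
  have h1 : k1 ≠ 0 := hk1.ne'
  have h2 : k2 ≠ 0 := hk2.ne'
  have h12 : k1 + k2 ≠ 0 := hk12.ne'
  have hσ' : σ ≠ 0 := hσ.ne'
  refine ⟨?_, ?_, ?_, ?_⟩ <;>
  · simp only [hFadef, hFbdef, hda1, hdb1, hda2, hdb2]
    field_simp
    ring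
end

section
/- Fix μ > 0, σ > 0, k > 0 and define g(a) = (kσ²/(2μ²))·e^{-2μa/σ²}·(2e^{2μa/σ²} - e^{-4μ²/(kσ²)} - e^{4μa/σ²}). Then a* = (σ²/(2μ))·ln(1 - sqrt(1 - e^{-4μ²/(kσ²)})) is a root of g(a) = 0, and moreover lim_{μ→0+} a* = -σ/√k and lim_{μ→0+} (-a* - 2μ/k) = σ/√k. -/
open Real Filter

theorem stmt2 (σ k : ℝ) (hσ : 0 < σ) (hk : 0 < k)
    (g : ℝ → ℝ → ℝ)
    (hg : ∀ μ a, g μ a = (k * σ ^ 2 / (2 * μ ^ 2)) * Real.exp (-2 * μ * a / σ ^ 2) *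
        (2 * Real.exp (2 * μ * a / σ ^ 2) - Real.exp (-4 * μ ^ 2 / (k * σ ^ 2))
          - Real.exp (4 * μ * a / σ ^ 2)))
    (astar : ℝ → ℝ)
    (ha : ∀ μ, astar μ = (σ ^ 2 / (2 * μ)) *
        Real.log (1 - Real.sqrt (1 - Real.exp (-4 * μ ^ 2 / (k * σ ^ 2))))) :
    (∀ μ : ℝ, 0 < μ → g μ (astar μ) = 0) ∧
    Tendsto astar (nhdsWithin 0 (Set.Ioi 0)) (nhds (-σ / Real.sqrt k)) ∧
    Tendsto (fun μ => -astar μ - 2 * μ / k) (nhdsWithin 0 (Set.Ioi 0))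
      (nhds (σ / Real.sqrt k)) := by
  have hσ2 : (0:ℝ) < σ ^ 2 := by positivity
  have hkσ : (0:ℝ) < k * σ ^ 2 := by positivity
  -- Part 1
  have part1 : ∀ μ : ℝ, 0 < μ → g μ (astar μ) = 0 := by
    intro μ hμ
    have hμ0 : μ ≠ 0 := ne_of_gt hμ
    rw [hg, ha]
    set E := Real.exp (-4 * μ ^ 2 / (k * σ ^ 2)) with hE
    have hE1 : E < 1 := by
      rw [hE, Real.exp_lt_one_iff, show -4 * μ ^ 2 / (k * σ ^ 2) = -(4 * μ ^ 2 / (k * σ ^ 2)) from by ring]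
      have : (0:ℝ) < 4 * μ ^ 2 / (k * σ ^ 2) := by positivity
      linarith
    have hE0 : (0:ℝ) < E := Real.exp_pos _
    have h1E : (0:ℝ) ≤ 1 - E := by linarith
    have hs2 : Real.sqrt (1 - E) ^ 2 = 1 - E := Real.sq_sqrt h1E
    have hs1 : Real.sqrt (1 - E) < 1 := by
      nlinarith [Real.sqrt_nonneg (1 - E), hs2]
    set s := Real.sqrt (1 - E) with hsdef
    have hy : (0:ℝ) < 1 - s := by linarith
    set L := Real.log (1 - s) with hL
    have e1 : -2 * μ * (σ ^ 2 / (2 * μ) * L) / σ ^ 2 = -L := by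
      field_simp <;> ring
    have e2 : 2 * μ * (σ ^ 2 / (2 * μ) * L) / σ ^ 2 = L := by
      field_simp <;> ring
    have e3 : 4 * μ * (σ ^ 2 / (2 * μ) * L) / σ ^ 2 = L + L := by
      field_simp <;> ring
    rw [e1, e2, e3, Real.exp_add]
    have hexpL : Real.exp L = 1 - s := Real.exp_log hy
    rw [hexpL]
    have : 2 * (1 - s) - E - (1 - s) * (1 - s) = 0 := by nlinarith [hs2]
    rw [this, mul_zero]
  have hk0 : Real.sqrt k ≠ 0 := ne_of_gt (Real.sqrt_pos.mpr hk)
  set c : ℝ := 4 / (k * σ ^ 2) with hc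
  have hc0 : 0 < c := by positivity
  set u : ℝ → ℝ := fun μ => Real.sqrt (1 - Real.exp (-4 * μ ^ 2 / (k * σ ^ 2))) with hu
  set F : ℝ → ℝ := fun t => 1 - Real.exp (-4 * t / (k * σ ^ 2)) with hF
  -- derivative facts
  have hF0 : F 0 = 0 := by simp [hF]
  have hFd : HasDerivAt F c 0 := by
    have h1 : HasDerivAt (fun t : ℝ => -4 * t / (k * σ ^ 2)) (-4 / (k * σ ^ 2)) 0 := by
      simpa using ((hasDerivAt_id (0:ℝ)).const_mul (-4)).div_const (k * σ ^ 2)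
    have h2 := h1.exp
    have h3 := h2.const_sub (1:ℝ)
    refine h3.congr_deriv ?_
    simp [hc]
    ring
  have hFslope : Tendsto (fun t => F t / t) (nhdsWithin 0 {(0:ℝ)}ᶜ) (nhds c) := by
    have := hasDerivAt_iff_tendsto_slope.mp hFd
    refine this.congr' ?_
    filter_upwards [self_mem_nhdsWithin] with t ht
    simp [slope, hF0]
    ring
  -- μ² tends to 0 within ≠ 0
  have hsq : Tendsto (fun μ : ℝ => μ ^ 2) (nhdsWithin 0 (Set.Ioi 0)) (nhdsWithin 0 {(0:ℝ)}ᶜ) := by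
    apply tendsto_nhdsWithin_of_tendsto_nhds_of_eventually_within
    · have : Tendsto (fun μ : ℝ => μ ^ 2) (nhds 0) (nhds 0) := by
        simpa using (continuous_pow 2).tendsto (0:ℝ)
      exact this.mono_left nhdsWithin_le_nhds
    · filter_upwards [self_mem_nhdsWithin] with μ hμ
      have hμ' : (0:ℝ) < μ := hμ
      exact ne_of_gt (pow_pos hμ' 2)
  have hA : Tendsto (fun μ : ℝ => F (μ ^ 2) / μ ^ 2) (nhdsWithin 0 (Set.Ioi 0)) (nhds c) :=
    hFslope.comp hsq
  -- u μ / μ tends to sqrt c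
  have hsqrtc : Real.sqrt c = 2 / (Real.sqrt k * σ) := by
    rw [show c = (2 / (Real.sqrt k * σ)) ^ 2 from ?_, Real.sqrt_sq (by positivity)]
    rw [hc]
    field_simp
    rw [Real.sq_sqrt hk.le]
    ring
  have hEμlt : ∀ μ : ℝ, 0 < μ → Real.exp (-4 * μ ^ 2 / (k * σ ^ 2)) < 1 := by
    intro μ hμ
    rw [Real.exp_lt_one_iff, show -4 * μ ^ 2 / (k * σ ^ 2) = -(4 * μ ^ 2 / (k * σ ^ 2)) from by ring]
    have : (0:ℝ) < 4 * μ ^ 2 / (k * σ ^ 2) := by positivity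
    linarith
  have hB : Tendsto (fun μ : ℝ => u μ / μ) (nhdsWithin 0 (Set.Ioi 0))
      (nhds (2 / (Real.sqrt k * σ))) := by
    rw [← hsqrtc]
    have := (Real.continuous_sqrt.tendsto c).comp hA
    refine this.congr' ?_
    filter_upwards [self_mem_nhdsWithin] with μ hμ
    have hμ : (0:ℝ) < μ := hμ
    have hFμ : 0 ≤ F (μ ^ 2) := by
      have := (hEμlt μ hμ).le
      simp only [hF]
      linarith
    simp only [Function.comp]
    rw [Real.sqrt_div hFμ, Real.sqrt_sq hμ.le]
  -- u tends to 0 within ≠ 0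
  have hupos : ∀ μ : ℝ, 0 < μ → 0 < u μ := by
    intro μ hμ
    exact Real.sqrt_pos.mpr (by linarith [hEμlt μ hμ])
  have hucont : Tendsto u (nhdsWithin 0 (Set.Ioi 0)) (nhdsWithin 0 {(0:ℝ)}ᶜ) := by
    apply tendsto_nhdsWithin_of_tendsto_nhds_of_eventually_within
    · have hc' : Continuous u :=
        Real.continuous_sqrt.comp (continuous_const.sub (Real.continuous_exp.comp
          ((continuous_const.mul (continuous_pow 2)).div_const (k * σ ^ 2))))
      have : u 0 = 0 := by simp [hu]
      have := hc'.tendsto 0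
      rw [‹u 0 = 0›] at this
      exact this.mono_left nhdsWithin_le_nhds
    · filter_upwards [self_mem_nhdsWithin] with μ hμ
      exact ne_of_gt (hupos μ hμ)
  -- log(1-u)/u tends to -1
  have hGd : HasDerivAt (fun x : ℝ => Real.log (1 - x)) (-1) 0 := by
    have h1 : HasDerivAt (fun x : ℝ => 1 - x) (-1) 0 := by
      simpa using (hasDerivAt_id' (0:ℝ)).const_sub (1:ℝ)
    have := h1.log (by norm_num)
    simpa using this
  have hGslope : Tendsto (fun t : ℝ => Real.log (1 - t) / t) (nhdsWithin 0 {(0:ℝ)}ᶜ)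
      (nhds (-1)) := by
    have := hasDerivAt_iff_tendsto_slope.mp hGd
    refine this.congr' ?_
    filter_upwards [self_mem_nhdsWithin] with t ht
    simp [slope]
    ring
  have hC : Tendsto (fun μ : ℝ => Real.log (1 - u μ) / u μ) (nhdsWithin 0 (Set.Ioi 0))
      (nhds (-1)) := hGslope.comp hucont
  -- combine
  have part2 : Tendsto astar (nhdsWithin 0 (Set.Ioi 0)) (nhds (-σ / Real.sqrt k)) := by
    have hmul : Tendsto (fun μ : ℝ => σ ^ 2 / 2 * (Real.log (1 - u μ) / u μ) * (u μ / μ))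
        (nhdsWithin 0 (Set.Ioi 0)) (nhds (σ ^ 2 / 2 * (-1) * (2 / (Real.sqrt k * σ)))) :=
      ((tendsto_const_nhds.mul hC).mul hB)
    have hval : σ ^ 2 / 2 * (-1) * (2 / (Real.sqrt k * σ)) = -σ / Real.sqrt k := by
      field_simp
    rw [hval] at hmul
    refine hmul.congr' ?_
    filter_upwards [self_mem_nhdsWithin] with μ hμ
    have hμ : (0:ℝ) < μ := hμ
    have hμ0 : μ ≠ 0 := ne_of_gt hμ
    have hu0 : u μ ≠ 0 := ne_of_gt (hupos μ hμ)
    have heq : σ ^ 2 / 2 * (Real.log (1 - u μ) / u μ) * (u μ / μ)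
        = σ ^ 2 / (2 * μ) * Real.log (1 - u μ) := by
      field_simp
    rw [ha, heq]
  refine ⟨part1, part2, ?_⟩
  have h2 : Tendsto (fun μ : ℝ => 2 * μ / k) (nhdsWithin 0 (Set.Ioi 0)) (nhds 0) := by
    have : Tendsto (fun μ : ℝ => 2 * μ / k) (nhds 0) (nhds (2 * 0 / k)) := by
      exact ((continuous_const.mul continuous_id).div_const k).tendsto 0
    simpa using this.mono_left nhdsWithin_le_nhds
  have := (part2.neg).sub h2
  simpa [neg_div] using this
end

section
/- Let μ > 0, σ > 0, k1, k2 > 0, and define g(a) = (σ²/(2μ²))·(k1 + k2 - k2·e^{-(2μ/σ²)((k1/k2)a + 2μ/k2)} - k1·e^{2μa/σ²}) for a ∈ ℝ. Then g'(a) > 0 for all a < -2μ/(k1+k2), g(-2μ/k1) = (σ²k1/(2μ²))·(1 - e^{-4μ²/(σ²k1)}) > 0, and g(a) → -∞ as a → -∞. Consequently g has a unique root a* on (-∞, -2μ/k1). -/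
/-!
Writing `g(a) = C (k1 + k2 - k2 e^{L(a)} - k1 e^{U(a)})` with `U(a) = 2μa/σ²` and `L` the exponent
of the lower boundary, one finds `g'(a) = (k1/μ)(e^{L(a)} - e^{U(a)})`, and `L(a) > U(a)` exactly
when `a < -2μ/(k1+k2)`. So `g` is strictly increasing on `(-∞, -2μ/k1]`, while `L(a) → ∞` drives
`g` to `-∞` and `L(-2μ/k1) = 0` makes `g(-2μ/k1)` positive; the intermediate value theorem gives
the root, and monotonicity its uniqueness.
-/

open Real Filter Set

lemma existsUnique_lt_eq_zero_of_strictMonoOn {g : ℝ → ℝ} {b : ℝ} (hcont : ContinuousOn g (Iic b))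
    (hmono : StrictMonoOn g (Iic b)) (hbot : Tendsto g atBot atBot) (hb : 0 < g b) :
    ∃! a, a < b ∧ g a = 0 := by
  obtain ⟨x, hgx, hxb⟩ : ∃ x, g x < 0 ∧ x < b :=
    ((hbot.eventually (eventually_lt_atBot 0)).and (eventually_lt_atBot b)).exists
  obtain ⟨a, ⟨-, hab⟩, hga⟩ :=
    intermediate_value_Ico hxb.le (hcont.mono Icc_subset_Iic_self) ⟨hgx.le, hb⟩
  refine ⟨a, ⟨hab, hga⟩, fun c ⟨hcb, hgc⟩ => ?_⟩
  exact hmono.injOn (mem_Iic.2 hcb.le) (mem_Iic.2 hab.le) (hgc.trans hga.symm)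

noncomputable def reducedOptimality (μ σ k1 k2 a : ℝ) : ℝ :=
  (σ ^ 2 / (2 * μ ^ 2)) *
    (k1 + k2 - k2 * exp (-(2 * μ / σ ^ 2) * ((k1 / k2) * a + 2 * μ / k2))
      - k1 * exp (2 * μ * a / σ ^ 2))

section reducedOptimality

variable {μ σ k1 k2 : ℝ}

lemma continuous_reducedOptimality : Continuous (reducedOptimality μ σ k1 k2) := by
  unfold reducedOptimality
  fun_prop

lemma hasDerivAt_reducedOptimality (hμ : μ ≠ 0) (hσ : σ ≠ 0) (hk2 : k2 ≠ 0) (a : ℝ) :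
    HasDerivAt (reducedOptimality μ σ k1 k2)
      (k1 / μ * (exp (-(2 * μ / σ ^ 2) * ((k1 / k2) * a + 2 * μ / k2))
        - exp (2 * μ * a / σ ^ 2))) a := by
  have hlower : HasDerivAt (fun a => -(2 * μ / σ ^ 2) * ((k1 / k2) * a + 2 * μ / k2))
      (-(2 * μ / σ ^ 2) * (k1 / k2)) a := by
    simpa using (((hasDerivAt_id a).const_mul (k1 / k2)).add_const (2 * μ / k2)).const_mul
      (-(2 * μ / σ ^ 2))
  have hupper : HasDerivAt (fun a => 2 * μ * a / σ ^ 2) (2 * μ / σ ^ 2) a := by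
    simpa using ((hasDerivAt_id a).const_mul (2 * μ)).div_const (σ ^ 2)
  refine ((((hasDerivAt_const a (k1 + k2)).sub (hlower.exp.const_mul k2)).sub
    (hupper.exp.const_mul k1)).const_mul (σ ^ 2 / (2 * μ ^ 2))).congr_deriv ?_
  field_simp
  ring

lemma deriv_reducedOptimality_pos (hμ : 0 < μ) (hσ : σ ≠ 0) (hk1 : 0 < k1) (hk2 : 0 < k2)
    {a : ℝ} (ha : a < -2 * μ / (k1 + k2)) : 0 < deriv (reducedOptimality μ σ k1 k2) a := by
  rw [(hasDerivAt_reducedOptimality hμ.ne' hσ hk2.ne' a).deriv]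
  refine mul_pos (div_pos hk1 hμ) (sub_pos.2 (exp_lt_exp.2 ?_))
  have ha' : a * (k1 + k2) + 2 * μ < 0 := by
    rw [lt_div_iff₀ (by positivity)] at ha
    linarith
  have hgap : -(2 * μ / σ ^ 2) * ((k1 / k2) * a + 2 * μ / k2) - 2 * μ * a / σ ^ 2
      = 2 * μ / (σ ^ 2 * k2) * -(a * (k1 + k2) + 2 * μ) := by
    field_simp
    ring
  have : 0 < 2 * μ / (σ ^ 2 * k2) * -(a * (k1 + k2) + 2 * μ) :=
    mul_pos (by positivity) (by linarith)
  linarith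

lemma strictMonoOn_reducedOptimality (hμ : 0 < μ) (hσ : σ ≠ 0) (hk1 : 0 < k1) (hk2 : 0 < k2) :
    StrictMonoOn (reducedOptimality μ σ k1 k2) (Iic (-2 * μ / k1)) := by
  have hle : -2 * μ / k1 ≤ -2 * μ / (k1 + k2) := by
    rw [div_le_div_iff₀ hk1 (by positivity)]
    nlinarith
  refine strictMonoOn_of_deriv_pos (convex_Iic _) continuous_reducedOptimality.continuousOn
    fun x hx => deriv_reducedOptimality_pos hμ hσ hk1 hk2 ?_
  rw [interior_Iic] at hx
  exact hx.trans_le hle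

lemma reducedOptimality_neg_two_mul_div (hk1 : k1 ≠ 0) :
    reducedOptimality μ σ k1 k2 (-2 * μ / k1)
      = (σ ^ 2 * k1 / (2 * μ ^ 2)) * (1 - exp (-4 * μ ^ 2 / (σ ^ 2 * k1))) := by
  have hlower : -(2 * μ / σ ^ 2) * ((k1 / k2) * (-2 * μ / k1) + 2 * μ / k2) = 0 := by
    rw [div_mul_div_comm, mul_comm k1, mul_div_mul_right _ _ hk1]
    ring
  have hupper : 2 * μ * (-2 * μ / k1) / σ ^ 2 = -4 * μ ^ 2 / (σ ^ 2 * k1) := by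
    ring
  rw [reducedOptimality, hlower, hupper, exp_zero]
  ring

lemma tendsto_reducedOptimality_atBot (hμ : 0 < μ) (hσ : σ ≠ 0) (hk1 : 0 < k1) (hk2 : 0 < k2) :
    Tendsto (reducedOptimality μ σ k1 k2) atBot atBot := by
  set C := σ ^ 2 / (2 * μ ^ 2)
  have hC : 0 < C := by positivity
  have hlower : Tendsto (fun a => -(2 * μ / σ ^ 2) * ((k1 / k2) * a + 2 * μ / k2)) atBot atTop :=
    (tendsto_const_mul_atTop_of_neg (neg_lt_zero.2 (by positivity))).2
      (tendsto_atBot_add_const_right _ _ (tendsto_id.const_mul_atBot (div_pos hk1 hk2)))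
  have hbounded : ∀ a, C * (k1 + k2) - C * k1 * exp (2 * μ * a / σ ^ 2) ≤ C * (k1 + k2) :=
    fun a => sub_le_self _ (by positivity)
  refine (tendsto_atBot_add_left_of_ge _ _ hbounded
    ((tendsto_const_mul_atBot_of_neg (neg_lt_zero.2 (mul_pos hC hk2))).2
      (tendsto_exp_atTop.comp hlower))).congr fun a => ?_
  simp only [reducedOptimality, Function.comp_apply]
  ring

end reducedOptimality

theorem stmt3 (μ σ k1 k2 : ℝ) (hμ : 0 < μ) (hσ : 0 < σ) (hk1 : 0 < k1) (hk2 : 0 < k2)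
    (g : ℝ → ℝ)
    (hg : ∀ a, g a = (σ ^ 2 / (2 * μ ^ 2)) *
        (k1 + k2 - k2 * Real.exp (-(2 * μ / σ ^ 2) * ((k1 / k2) * a + 2 * μ / k2))
          - k1 * Real.exp (2 * μ * a / σ ^ 2))) :
    (∀ a : ℝ, a < -2 * μ / (k1 + k2) → 0 < deriv g a) ∧
    g (-2 * μ / k1) = (σ ^ 2 * k1 / (2 * μ ^ 2)) * (1 - Real.exp (-4 * μ ^ 2 / (σ ^ 2 * k1))) ∧
    0 < g (-2 * μ / k1) ∧
    Tendsto g atBot atBot ∧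
    (∃! a : ℝ, a < -2 * μ / k1 ∧ g a = 0) := by
  obtain rfl : g = reducedOptimality μ σ k1 k2 := funext hg
  have hvalue := reducedOptimality_neg_two_mul_div (μ := μ) (σ := σ) (k2 := k2) hk1.ne'
  have hpos : 0 < reducedOptimality μ σ k1 k2 (-2 * μ / k1) := by
    rw [hvalue]
    refine mul_pos (by positivity) (sub_pos.2 (exp_lt_one_iff.2 ?_))
    exact div_neg_of_neg_of_pos (by nlinarith) (by positivity)
  have hbot := tendsto_reducedOptimality_atBot hμ hσ.ne' hk1 hk2
  refine ⟨fun a => deriv_reducedOptimality_pos hμ hσ.ne' hk1 hk2, hvalue, hpos, hbot, ?_⟩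
  exact existsUnique_lt_eq_zero_of_strictMonoOn continuous_reducedOptimality.continuousOn
    (strictMonoOn_reducedOptimality hμ hσ.ne' hk1 hk2) hbot hpos
end

section
/- Let S', m' : ℝ → (0,∞) be continuous with ∫ₐᵇ μ(t)m'(t)dt = 1/S'(b) - 1/S'(a), let c : ℝ → ℝ be continuous, q_u, q_d ≥ 0, π1(x) = c(x) + q_d·μ(x), π2(x) = c(x) - q_u·μ(x), m(a,b) = ∫ₐᵇ m'(t)dt, and define C(a,b) = (1/m(a,b))·(∫ₐᵇ c(t)m'(t)dt + q_u/S'(a) + q_d/S'(b)) for a < b. Then ∂C/∂a (a,b) = (m'(a)/m(a,b))·(C(a,b) - π2(a)) and ∂C/∂b (a,b) = (m'(b)/m(a,b))·(π1(b) - C(a,b)). -/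
open Real

/-!
The identity `∫ μ m' = Δ (1 / S')` makes `1 / S'` an antiderivative of `μ m'`, so moving an
endpoint changes the numerator `N = ∫ c m' + qu / S' a + qd / S' b` of `C = N / m` exactly
`π` times as fast as it changes `m` (`π = π2` at `a`, `π = π1` at `b`). A quotient whose
numerator moves `p` times as fast as its denominator `G` has derivative `G' / G * (p - N / G)`.
-/

theorem HasDerivAt.div_of_hasDerivAt_eq_mul {F G : ℝ → ℝ} {x r p : ℝ}
    (hF : HasDerivAt F (r * p) x) (hG : HasDerivAt G r x) (hGx : G x ≠ 0) :
    HasDerivAt (fun y => F y / G y) (r / G x * (p - F x / G x)) x := by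
  refine (hF.div hG hGx).congr_deriv ?_
  field_simp

theorem Continuous.hasDerivAt_integral_left {f : ℝ → ℝ} (hf : Continuous f) (a b : ℝ) :
    HasDerivAt (fun x => ∫ t in x..b, f t) (-f a) a :=
  intervalIntegral.integral_hasDerivAt_left (hf.intervalIntegrable _ _)
    (hf.stronglyMeasurableAtFilter _ _) hf.continuousAt

theorem hasDerivAt_of_integral_eq_sub {f g : ℝ → ℝ} (hf : Continuous f)
    (hfg : ∀ a b, ∫ t in a..b, f t = g b - g a) (x : ℝ) : HasDerivAt g (f x) x := by
  have hg : g = fun y => (∫ t in x..y, f t) + g x := by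
    funext y
    rw [hfg]
    ring
  rw [hg]
  exact ((hf.integral_hasStrictDerivAt x x).hasDerivAt).add_const _

theorem stmt7_general (μ c S' m' : ℝ → ℝ)
    (hm'cont : Continuous m')
    (hm'pos : ∀ x, 0 < m' x)
    (hccont : Continuous c) (hμcont : Continuous μ)
    (qu qd : ℝ)
    (hcanon : ∀ a b : ℝ, (∫ t in a..b, μ t * m' t) = 1 / S' b - 1 / S' a)
    (π1 π2 : ℝ → ℝ)
    (hπ1 : ∀ x, π1 x = c x + qd * μ x) (hπ2 : ∀ x, π2 x = c x - qu * μ x)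
    (m : ℝ → ℝ → ℝ) (hm : ∀ a b, m a b = ∫ t in a..b, m' t)
    (C : ℝ → ℝ → ℝ)
    (hC : ∀ a b, C a b = (1 / m a b) *
        ((∫ t in a..b, c t * m' t) + qu / S' a + qd / S' b)) :
    ∀ a b : ℝ, a < b →
      HasDerivAt (fun x => C x b) ((m' a / m a b) * (C a b - π2 a)) a ∧
      HasDerivAt (fun y => C a y) ((m' b / m a b) * (π1 b - C a b)) b := by
  intro a b hab
  have hm_ne : m a b ≠ 0 := by
    rw [hm]
    exact (intervalIntegral.intervalIntegral_pos_of_pos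
      (hm'cont.intervalIntegrable a b) hm'pos hab).ne'
  have hC_div : ∀ a b, C a b = ((∫ t in a..b, c t * m' t) + qu / S' a + qd / S' b) / m a b :=
    fun a b => by rw [hC, one_div_mul_eq_div]
  have hS_inv (k x : ℝ) : HasDerivAt (fun y => k / S' y) (k * (μ x * m' x)) x := by
    have h := hasDerivAt_of_integral_eq_sub (f := fun t => μ t * m' t)
      (hμcont.mul hm'cont) hcanon x
    simpa only [mul_one_div] using h.const_mul k
  have hcm : Continuous fun t => c t * m' t := hccont.mul hm'cont
  simp only [hC_div, hm] at hm_ne ⊢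
  constructor
  · have hnum : HasDerivAt (fun x => (∫ t in x..b, c t * m' t) + qu / S' x + qd / S' b)
        (-m' a * π2 a) a :=
      (((hcm.hasDerivAt_integral_left a b).add (hS_inv qu a)).add_const _).congr_deriv
        (by rw [hπ2]; ring)
    exact (hnum.div_of_hasDerivAt_eq_mul (hm'cont.hasDerivAt_integral_left a b)
      hm_ne).congr_deriv (by ring)
  · have hnum : HasDerivAt (fun y => (∫ t in a..y, c t * m' t) + qu / S' a + qd / S' y)
        (m' b * π1 b) b :=
      (((hcm.integral_hasStrictDerivAt a b).hasDerivAt.add_const _).add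
        (hS_inv qd b)).congr_deriv (by rw [hπ1]; ring)
    exact hnum.div_of_hasDerivAt_eq_mul (hm'cont.integral_hasStrictDerivAt a b).hasDerivAt hm_ne

theorem stmt7 (μ c S' m' : ℝ → ℝ)
    (hS'cont : Continuous S') (hm'cont : Continuous m')
    (hS'pos : ∀ x, 0 < S' x) (hm'pos : ∀ x, 0 < m' x)
    (hccont : Continuous c) (hμcont : Continuous μ)
    (qu qd : ℝ) (hqu : 0 ≤ qu) (hqd : 0 ≤ qd)
    (hcanon : ∀ a b : ℝ, (∫ t in a..b, μ t * m' t) = 1 / S' b - 1 / S' a)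
    (π1 π2 : ℝ → ℝ)
    (hπ1 : ∀ x, π1 x = c x + qd * μ x) (hπ2 : ∀ x, π2 x = c x - qu * μ x)
    (m : ℝ → ℝ → ℝ) (hm : ∀ a b, m a b = ∫ t in a..b, m' t)
    (C : ℝ → ℝ → ℝ)
    (hC : ∀ a b, C a b = (1 / m a b) *
        ((∫ t in a..b, c t * m' t) + qu / S' a + qd / S' b)) :
    ∀ a b : ℝ, a < b →
      HasDerivAt (fun x => C x b) ((m' a / m a b) * (C a b - π2 a)) a ∧
      HasDerivAt (fun y => C a y) ((m' b / m a b) * (π1 b - C a b)) b :=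
  stmt7_general μ c S' m' hm'cont hm'pos hccont hμcont qu qd hcanon π1 π2 hπ1 hπ2 m hm C hC
end

section
/- Under the setting of the cost functional C(a,b) for a < b, the first-order stationarity conditions ∂C/∂a = 0 and ∂C/∂b = 0 are equivalent to I1(a,b) := ∫ₐᵇ(π1(t) - π1(b))m'(t)dt + (q_d+q_u)/S'(a) = 0 and I2(a,b) := ∫ₐᵇ(π2(t) - π2(a))m'(t)dt + (q_d+q_u)/S'(b) = 0; moreover I1(a,b) - I2(a,b) = (π2(a) - π1(b))·m(a,b), so any stationary pair satisfies π1(b) = π2(a) = C(a,b). -/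
open Real MeasureTheory intervalIntegral

/-!
By the canonical identity the numerator of `C(a, b)` equals both
`∫ₐᵇ π₂ m' + (q_d + q_u) / S'(b)` and `∫ₐᵇ π₁ m' + (q_d + q_u) / S'(a)`, so `C(·, b)` and `C(a, ·)`
are ratios of integrals with one moving endpoint. The quotient rule gives
`∂ₐC = m'(a) / m · (C - π₂(a))` and `∂_b C = m'(b) / m · (π₁(b) - C)`, while `I₁ = (C - π₁(b)) m` and
`I₂ = (C - π₂(a)) m`; all claims follow because `m'` and `m(a, b)` are positive.
-/

section IntegralRatio

variable {p w : ℝ → ℝ} {a b : ℝ}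

theorem integral_add_const_mul_mul {f g : ℝ → ℝ}
    (hf : IntervalIntegrable (fun t => f t * w t) volume a b)
    (hg : IntervalIntegrable (fun t => g t * w t) volume a b) (q : ℝ) :
    ∫ t in a..b, (f t + q * g t) * w t
      = (∫ t in a..b, f t * w t) + q * ∫ t in a..b, g t * w t := by
  simp_rw [add_mul, mul_assoc]
  rw [integral_add hf (hg.const_mul q), intervalIntegral.integral_const_mul]

theorem integral_sub_const_mul_add_eq (hpw : IntervalIntegrable (fun t => p t * w t) volume a b)
    (hw : IntervalIntegrable w volume a b) (hM : ∫ t in a..b, w t ≠ 0) (s K : ℝ) :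
    (∫ t in a..b, (p t - s) * w t) + K
      = (((∫ t in a..b, p t * w t) + K) / (∫ t in a..b, w t) - s) * ∫ t in a..b, w t := by
  simp_rw [sub_mul]
  rw [integral_sub hpw (hw.const_mul s), intervalIntegral.integral_const_mul]
  field_simp
  ring

theorem hasDerivAt_integral_ratio_right (hp : Continuous p) (hw : Continuous w) (K : ℝ)
    (hM : ∫ t in a..b, w t ≠ 0) :
    HasDerivAt (fun y => ((∫ t in a..y, p t * w t) + K) / ∫ t in a..y, w t)
      (w b / (∫ t in a..b, w t) *
        (p b - ((∫ t in a..b, p t * w t) + K) / ∫ t in a..b, w t)) b := by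
  have hpw : Continuous fun t => p t * w t := hp.mul hw
  have hnum := (integral_hasDerivAt_right (hpw.intervalIntegrable a b)
    (hpw.stronglyMeasurableAtFilter _ _) hpw.continuousAt).add_const K
  have hden := integral_hasDerivAt_right (hw.intervalIntegrable a b)
    (hw.stronglyMeasurableAtFilter _ _) hw.continuousAt
  refine (hnum.div hden hM).congr_deriv ?_
  field_simp

theorem hasDerivAt_integral_ratio_left (hp : Continuous p) (hw : Continuous w) (K : ℝ)
    (hM : ∫ t in a..b, w t ≠ 0) :
    HasDerivAt (fun x => ((∫ t in x..b, p t * w t) + K) / ∫ t in x..b, w t)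
      (w a / (∫ t in a..b, w t) *
        (((∫ t in a..b, p t * w t) + K) / (∫ t in a..b, w t) - p a)) a := by
  have hratio (x y : ℝ) : ((∫ t in x..y, p t * w t) + K) / ∫ t in x..y, w t
      = ((∫ t in y..x, p t * w t) + -K) / ∫ t in y..x, w t := by
    rw [integral_symm x, integral_symm x y, ← neg_add, neg_div_neg_eq]
  have h := hasDerivAt_integral_ratio_right hp hw (-K) (a := b) (b := a)
    (by rwa [integral_symm, neg_ne_zero])
  simp_rw [hratio _ b]
  refine h.congr_deriv ?_
  rw [integral_symm a b]
  ring

end IntegralRatio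

theorem stmt8_general (μ c S' m' : ℝ → ℝ)
    (hm'cont : Continuous m')
    (hm'pos : ∀ x, 0 < m' x)
    (hccont : Continuous c) (hμcont : Continuous μ)
    (qu qd : ℝ)
    (hcanon : ∀ a b : ℝ, (∫ t in a..b, μ t * m' t) = 1 / S' b - 1 / S' a)
    (π1 π2 : ℝ → ℝ)
    (hπ1 : ∀ x, π1 x = c x + qd * μ x) (hπ2 : ∀ x, π2 x = c x - qu * μ x)
    (m : ℝ → ℝ → ℝ) (hm : ∀ a b, m a b = ∫ t in a..b, m' t)
    (C : ℝ → ℝ → ℝ)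
    (hC : ∀ a b, C a b = (1 / m a b) *
        ((∫ t in a..b, c t * m' t) + qu / S' a + qd / S' b))
    (I1 I2 : ℝ → ℝ → ℝ)
    (hI1 : ∀ a b, I1 a b = (∫ t in a..b, (π1 t - π1 b) * m' t) + (qd + qu) / S' a)
    (hI2 : ∀ a b, I2 a b = (∫ t in a..b, (π2 t - π2 a) * m' t) + (qd + qu) / S' b) :
    ∀ a b : ℝ, a < b →
      ((deriv (fun x => C x b) a = 0 ∧ deriv (fun y => C a y) b = 0) ↔
        (I1 a b = 0 ∧ I2 a b = 0)) ∧
      I1 a b - I2 a b = (π2 a - π1 b) * m a b ∧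
      (I1 a b = 0 → I2 a b = 0 → π1 b = C a b ∧ π2 a = C a b) := by
  intro a b hab
  have hπ1cont : Continuous π1 := by simp_rw [funext hπ1]; fun_prop
  have hπ2cont : Continuous π2 := by simp_rw [funext hπ2]; fun_prop
  have hint {p : ℝ → ℝ} (hp : Continuous p) x y :
      IntervalIntegrable (fun t => p t * m' t) volume x y :=
    (hp.mul hm'cont).intervalIntegrable x y
  have hCright x y : C x y = ((∫ t in x..y, π1 t * m' t) + (qd + qu) / S' x) / m x y := by
    simp_rw [hC, hπ1, integral_add_const_mul_mul (hint hccont x y) (hint hμcont x y), hcanon]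
    ring
  have hCleft x y : C x y = ((∫ t in x..y, π2 t * m' t) + (qd + qu) / S' y) / m x y := by
    simp_rw [hC, hπ2, sub_eq_add_neg, ← neg_mul,
      integral_add_const_mul_mul (hint hccont x y) (hint hμcont x y), hcanon]
    ring
  have hm' : ∫ t in a..b, m' t ≠ 0 :=
    (intervalIntegral_pos_of_pos (hm'cont.intervalIntegrable a b) hm'pos hab).ne'
  have hDa : HasDerivAt (fun x => C x b) (m' a / m a b * (C a b - π2 a)) a := by
    simpa only [hCleft, hm] using hasDerivAt_integral_ratio_left hπ2cont hm'cont _ hm'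
  have hDb : HasDerivAt (fun y => C a y) (m' b / m a b * (π1 b - C a b)) b := by
    simpa only [hCright, hm] using hasDerivAt_integral_ratio_right hπ1cont hm'cont _ hm'
  have hI1C : I1 a b = (C a b - π1 b) * m a b := by
    rw [hI1, integral_sub_const_mul_add_eq (hint hπ1cont a b) (hm'cont.intervalIntegrable a b) hm',
      hCright, hm]
  have hI2C : I2 a b = (C a b - π2 a) * m a b := by
    rw [hI2, integral_sub_const_mul_add_eq (hint hπ2cont a b) (hm'cont.intervalIntegrable a b) hm',
      hCleft, hm]
  have hM : m a b ≠ 0 := hm a b ▸ hm'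
  refine ⟨?_, by rw [hI1C, hI2C]; ring, fun h1 h2 => ?_⟩
  · rw [hDa.deriv, hDb.deriv, hI1C, hI2C, and_comm]
    simp [hM, (hm'pos a).ne', (hm'pos b).ne', sub_eq_zero, eq_comm]
  · simp only [hI1C, hI2C, mul_eq_zero, hM, or_false, sub_eq_zero] at h1 h2
    exact ⟨h1.symm, h2.symm⟩

theorem stmt8 (μ c S' m' : ℝ → ℝ)
    (hS'cont : Continuous S') (hm'cont : Continuous m')
    (hS'pos : ∀ x, 0 < S' x) (hm'pos : ∀ x, 0 < m' x)
    (hccont : Continuous c) (hμcont : Continuous μ)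
    (qu qd : ℝ) (hqu : 0 ≤ qu) (hqd : 0 ≤ qd)
    (hcanon : ∀ a b : ℝ, (∫ t in a..b, μ t * m' t) = 1 / S' b - 1 / S' a)
    (π1 π2 : ℝ → ℝ)
    (hπ1 : ∀ x, π1 x = c x + qd * μ x) (hπ2 : ∀ x, π2 x = c x - qu * μ x)
    (m : ℝ → ℝ → ℝ) (hm : ∀ a b, m a b = ∫ t in a..b, m' t)
    (C : ℝ → ℝ → ℝ)
    (hC : ∀ a b, C a b = (1 / m a b) *
        ((∫ t in a..b, c t * m' t) + qu / S' a + qd / S' b))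
    (I1 I2 : ℝ → ℝ → ℝ)
    (hI1 : ∀ a b, I1 a b = (∫ t in a..b, (π1 t - π1 b) * m' t) + (qd + qu) / S' a)
    (hI2 : ∀ a b, I2 a b = (∫ t in a..b, (π2 t - π2 a) * m' t) + (qd + qu) / S' b) :
    ∀ a b : ℝ, a < b →
      ((deriv (fun x => C x b) a = 0 ∧ deriv (fun y => C a y) b = 0) ↔
        (I1 a b = 0 ∧ I2 a b = 0)) ∧
      I1 a b - I2 a b = (π2 a - π1 b) * m a b ∧
      (I1 a b = 0 → I2 a b = 0 → π1 b = C a b ∧ π2 a = C a b) :=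
  stmt8_general μ c S' m' hm'cont hm'pos hccont hμcont qu qd hcanon π1 π2 hπ1 hπ2 m hm C hC I1 I2
    hI1 hI2
end

section
/- Let σ : ℝ → (0,∞) be continuous and c : ℝ → ℝ continuous, strictly decreasing on ℝ₋, strictly increasing on ℝ₊, with c(x) → ∞ as |x| → ∞. Let q := (q_d + q_u)/2 > 0. For a < 0 define b_a > 0 as the unique positive point with c(b_a) = c(a), and g(a) = ∫ₐ^{b_a}(c(t) - c(a))/σ²(t) dt + q. If σ̂ : ℝ → (0,∞) is continuous with σ̂²(x) > σ²(x) for all x, and ĝ is defined analogously with σ̂, then g(a) < ĝ(a) for all a < 0; consequently, if a* and ã are the unique roots of g = 0 and ĝ = 0 respectively, then ã < a* and b_{ã} > b_{a*}. -/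
/-!
Since `c t ≤ c a` on `[a, b_a]`, the integrand `(c t - c a) / σ² t` is nonpositive, and it is
strictly negative at `0`; raising `σ²` pointwise therefore strictly raises the integral, so
`g < ĝ` on `ℝ₋`. Moreover `ĝ` is strictly increasing on `ℝ₋`: moving `a` to the right shrinks
`[a, b_a]`, removing only nonpositive contributions, and lowers the level `c a` subtracted from
`c`. Hence `ĝ a* > g a* = 0 = ĝ ã` forces `ã < a*`, and `b_a` is strictly decreasing.
-/

open Filter Set

section Valley

variable {c B : ℝ → ℝ}

lemma apply_le_of_mem_Icc_of_apply_eq (hanti : AntitoneOn c (Iic 0))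
    (hmono : MonotoneOn c (Ici 0)) {a b t : ℝ} (ha : a ≤ 0) (hb : 0 ≤ b) (hab : c b = c a)
    (ht : t ∈ Icc a b) : c t ≤ c a := by
  rcases le_total t 0 with h0 | h0
  · exact hanti ha h0 ht.1
  · exact hab ▸ hmono h0 hb ht.2

lemma strictAntiOn_of_apply_eq (hanti : StrictAntiOn c (Iic 0))
    (hmono : StrictMonoOn c (Ici 0)) (hB : ∀ a, a < 0 → 0 < B a ∧ c (B a) = c a) :
    StrictAntiOn B (Iio 0) := by
  intro a₁ ha₁ a₂ ha₂ h
  obtain ⟨hb₁, hc₁⟩ := hB a₁ ha₁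
  obtain ⟨hb₂, hc₂⟩ := hB a₂ ha₂
  refine (hmono.lt_iff_lt (mem_Ici.2 hb₂.le) (mem_Ici.2 hb₁.le)).1 ?_
  rw [hc₁, hc₂]
  exact hanti (mem_Iic.2 (le_of_lt ha₁)) (mem_Iic.2 (le_of_lt ha₂)) h

end Valley

lemma integral_div_lt_integral_div_of_lt {f s ŝ : ℝ → ℝ} {a b : ℝ} (hab : a < b)
    (hf : Continuous f) (hs : Continuous s) (hŝ : Continuous ŝ)
    (hs_pos : ∀ x, 0 < s x) (hsŝ : ∀ x, s x < ŝ x)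
    (hf_nonpos : ∀ x ∈ Icc a b, f x ≤ 0) {x₀ : ℝ} (hx₀ : x₀ ∈ Icc a b) (hfx₀ : f x₀ < 0) :
    ∫ x in a..b, f x / s x < ∫ x in a..b, f x / ŝ x := by
  have hŝ_pos x : 0 < ŝ x := (hs_pos x).trans (hsŝ x)
  refine intervalIntegral.integral_lt_integral_of_continuousOn_of_le_of_exists_lt hab
    (hf.div hs fun x => (hs_pos x).ne').continuousOn
    (hf.div hŝ fun x => (hŝ_pos x).ne').continuousOn
    (fun x hx => ?_) ⟨x₀, hx₀, ?_⟩
  · have := div_le_div_of_nonneg_left (neg_nonneg.2 (hf_nonpos x (Ioc_subset_Icc_self hx)))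
      (hs_pos x) (hsŝ x).le
    rw [neg_div, neg_div] at this
    linarith
  · have := div_lt_div_of_pos_left (neg_pos.2 hfx₀) (hs_pos x₀) (hsŝ x₀)
    rw [neg_div, neg_div] at this
    linarith

lemma integral_nonpos_of_forall_mem_Icc {f : ℝ → ℝ} {a b : ℝ} (hab : a ≤ b) (hf : Continuous f)
    (h : ∀ x ∈ Icc a b, f x ≤ 0) : ∫ x in a..b, f x ≤ 0 := by
  simpa using intervalIntegral.integral_mono_on hab (hf.intervalIntegrable a b)
    intervalIntegrable_const h

lemma strictMonoOn_integral_sub_div {c B w : ℝ → ℝ} (hc : Continuous c)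
    (hanti : StrictAntiOn c (Iic 0)) (hmono : StrictMonoOn c (Ici 0))
    (hB : ∀ a, a < 0 → 0 < B a ∧ c (B a) = c a) (hw : Continuous w) (hw_pos : ∀ x, 0 < w x) :
    StrictMonoOn (fun a => ∫ t in a..B a, (c t - c a) / w t) (Iio 0) := by
  intro a₁ (ha₁ : a₁ < 0) a₂ (ha₂ : a₂ < 0) h
  obtain ⟨hb₁, hc₁⟩ := hB a₁ ha₁
  obtain ⟨hb₂, -⟩ := hB a₂ ha₂
  have hB₂₁ : B a₂ < B a₁ := strictAntiOn_of_apply_eq hanti hmono hB ha₁ ha₂ h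
  have hF k : Continuous fun t => (c t - k) / w t :=
    (hc.sub continuous_const).div hw fun t => (hw_pos t).ne'
  have hF_nonpos : ∀ t ∈ Icc a₁ (B a₁), (c t - c a₁) / w t ≤ 0 := fun t ht =>
    div_nonpos_of_nonpos_of_nonneg
      (sub_nonpos.2 <| apply_le_of_mem_Icc_of_apply_eq hanti.antitoneOn hmono.monotoneOn
        ha₁.le hb₁.le hc₁ ht)
      (hw_pos t).le
  have hleft : ∫ t in a₁..a₂, (c t - c a₁) / w t ≤ 0 :=
    integral_nonpos_of_forall_mem_Icc h.le (hF _) fun t ht =>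
      hF_nonpos t ⟨ht.1, ht.2.trans (ha₂.trans hb₁).le⟩
  have hright : ∫ t in B a₂..B a₁, (c t - c a₁) / w t ≤ 0 :=
    integral_nonpos_of_forall_mem_Icc hB₂₁.le (hF _) fun t ht =>
      hF_nonpos t ⟨(h.trans (ha₂.trans hb₂)).le.trans ht.1, ht.2⟩
  have hmiddle : ∫ t in a₂..B a₂, (c t - c a₁) / w t < ∫ t in a₂..B a₂, (c t - c a₂) / w t :=
    intervalIntegral.integral_lt_integral_of_continuousOn_of_le_of_exists_lt (ha₂.trans hb₂)
      (hF _).continuousOn (hF _).continuousOn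
      (fun t _ => div_le_div_of_nonneg_right
        (sub_le_sub_left (hanti ha₁.le ha₂.le h).le _) (hw_pos t).le)
      ⟨a₂, left_mem_Icc.2 (ha₂.trans hb₂).le,
        div_lt_div_of_pos_right (sub_lt_sub_left (hanti ha₁.le ha₂.le h) _) (hw_pos a₂)⟩
  have hI a b := (hF (c a₁)).intervalIntegrable (μ := MeasureTheory.volume) a b
  dsimp only
  rw [← intervalIntegral.integral_add_adjacent_intervals (hI a₁ a₂) (hI a₂ (B a₁)),
    ← intervalIntegral.integral_add_adjacent_intervals (hI a₂ (B a₂)) (hI (B a₂) (B a₁))]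
  linarith

theorem stmt11_general (σ σhat c : ℝ → ℝ)
    (hσcont : Continuous σ) (hσpos : ∀ x, 0 < σ x)
    (hσhatcont : Continuous σhat)
    (hcomp : ∀ x, σ x ^ 2 < σhat x ^ 2)
    (hccont : Continuous c)
    (hcanti : StrictAntiOn c (Set.Iic 0)) (hcmono : StrictMonoOn c (Set.Ici 0))
    (q : ℝ)
    (B : ℝ → ℝ) (hB : ∀ a, a < 0 → 0 < B a ∧ c (B a) = c a)
    (g ghat : ℝ → ℝ)
    (hg : ∀ a, g a = (∫ t in a..(B a), (c t - c a) / σ t ^ 2) + q)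
    (hghat : ∀ a, ghat a = (∫ t in a..(B a), (c t - c a) / σhat t ^ 2) + q) :
    (∀ a, a < 0 → g a < ghat a) ∧
    (∀ astar atil : ℝ, astar < 0 → g astar = 0 → atil < 0 → ghat atil = 0 →
      atil < astar ∧ B astar < B atil) := by
  have hlt a (ha : a < 0) : g a < ghat a := by
    obtain ⟨hb, hcb⟩ := hB a ha
    rw [hg, hghat]
    refine add_lt_add_left (integral_div_lt_integral_div_of_lt (ha.trans hb)
      (hccont.sub continuous_const) (hσcont.pow 2) (hσhatcont.pow 2)
      (fun x => pow_pos (hσpos x) 2) hcomp (fun t ht => sub_nonpos.2 ?_)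
      ⟨ha.le, hb.le⟩ (sub_neg.2 (hcanti ha.le (mem_Iic.2 le_rfl) ha))) q
    exact apply_le_of_mem_Icc_of_apply_eq hcanti.antitoneOn hcmono.monotoneOn ha.le hb.le hcb ht
  refine ⟨hlt, fun astar atil hastar hgstar hatil hghatil => ?_⟩
  have hghat_mono := strictMonoOn_integral_sub_div (w := fun x => σhat x ^ 2) hccont hcanti
    hcmono hB (hσhatcont.pow 2) (fun x => (pow_pos (hσpos x) 2).trans (hcomp x))
  have hlt_star : atil < astar := by
    refine (hghat_mono.lt_iff_lt hatil hastar).1 ?_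
    have := hlt astar hastar
    simp only [hg, hghat] at hgstar hghatil this ⊢
    linarith
  exact ⟨hlt_star, strictAntiOn_of_apply_eq hcanti hcmono hB hatil hastar hlt_star⟩

theorem stmt11 (σ σhat c : ℝ → ℝ)
    (hσcont : Continuous σ) (hσpos : ∀ x, 0 < σ x)
    (hσhatcont : Continuous σhat) (hσhatpos : ∀ x, 0 < σhat x)
    (hcomp : ∀ x, σ x ^ 2 < σhat x ^ 2)
    (hccont : Continuous c)
    (hcanti : StrictAntiOn c (Set.Iic 0)) (hcmono : StrictMonoOn c (Set.Ici 0))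
    (hctop : Tendsto c atTop atTop) (hcbot : Tendsto c atBot atTop)
    (q : ℝ) (hq : 0 < q)
    (B : ℝ → ℝ) (hB : ∀ a, a < 0 → 0 < B a ∧ c (B a) = c a)
    (g ghat : ℝ → ℝ)
    (hg : ∀ a, g a = (∫ t in a..(B a), (c t - c a) / σ t ^ 2) + q)
    (hghat : ∀ a, ghat a = (∫ t in a..(B a), (c t - c a) / σhat t ^ 2) + q) :
    (∀ a, a < 0 → g a < ghat a) ∧
    (∀ astar atil : ℝ, astar < 0 → g astar = 0 → atil < 0 → ghat atil = 0 →
      atil < astar ∧ B astar < B atil) :=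
  stmt11_general σ σhat c hσcont hσpos hσhatcont hcomp hccont hcanti hcmono q B hB g ghat hg hghat
end

section
/- Let σ : ℝ → (0,∞) be continuous, c : ℝ → ℝ continuous and even, strictly increasing on ℝ₊ with c(x) → ∞ as x → ∞, σ even, and q := (q_d + q_u)/2 > 0. Then the equation ĝ(b) := q + ∫_{-b}^{b} c(t)/σ²(t) dt - c(b)·∫_{-b}^{b} 1/σ²(t) dt = 0 has a unique positive root b*, and ĝ(b) > 0 for 0 < b < b* while ĝ(b) < 0 for b > b*. -/
open Real Filter

/-!
Writing `w = 1 / σ²`, one has `ĝ(b) = q - G(b)` with `G(b) = ∫_{-b}^{b} (c(b) - c(t)) w(t) dt`.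
Since `c` is even and increasing on `[0, ∞)`, the integrand is nonnegative on `[-b, b]`, so
enlarging `b` both raises the integrand and widens the interval: `G` is strictly increasing on
`[0, ∞)`, continuous, `G(0) = 0`, and `G(b) ≥ (c(b) - c(1)) ∫₀¹ w → ∞`. Hence `ĝ` falls strictly
from `ĝ(0) = q > 0` to `-∞` and crosses zero exactly once.
-/

theorem existsUnique_pos_root_of_strictAntiOn {g : ℝ → ℝ} (hg : Continuous g)
    (hanti : StrictAntiOn g (Set.Ici 0)) (h0 : 0 < g 0) (htop : Tendsto g atTop atBot) :
    ∃! r : ℝ, 0 < r ∧ g r = 0 ∧ (∀ b, 0 < b → b < r → 0 < g b) ∧ (∀ b, r < b → g b < 0) := by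
  obtain ⟨B, hgB, hB⟩ :=
    ((htop.eventually (eventually_lt_atBot 0)).and (eventually_ge_atTop 0)).exists
  obtain ⟨r, hr, hgr⟩ := intermediate_value_Icc' hB hg.continuousOn ⟨hgB.le, h0.le⟩
  have hr0 : 0 < r := hr.1.lt_of_ne (by rintro rfl; linarith)
  have hr0' : r ∈ Set.Ici 0 := hr0.le
  refine ⟨r, ⟨hr0, hgr, fun b hb hbr => ?_, fun b hrb => ?_⟩, ?_⟩
  · simpa [hgr] using hanti (Set.mem_Ici.2 hb.le) hr0' hbr
  · simpa [hgr] using hanti hr0' (Set.mem_Ici.2 (hr0.le.trans hrb.le)) hrb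
  · rintro y ⟨hy, hgy, -⟩
    exact hanti.injOn (Set.mem_Ici.2 hy.le) hr0' (hgy.trans hgr.symm)

theorem apply_le_apply_of_abs_le {c : ℝ → ℝ} (hceven : ∀ x, c (-x) = c x)
    (hcmono : MonotoneOn c (Set.Ici 0)) {t b : ℝ} (h : |t| ≤ b) : c t ≤ c b := by
  have hct : c |t| = c t := by
    rcases abs_choice t with ht | ht <;> simp [ht, hceven]
  exact hct ▸ hcmono (abs_nonneg t) ((abs_nonneg t).trans h) h

noncomputable def excessCostIntegral (c w : ℝ → ℝ) (b : ℝ) : ℝ :=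
  ∫ t in (-b)..b, (c b - c t) * w t

section excessCostIntegral

variable {c w : ℝ → ℝ}

theorem intervalIntegrable_sub_mul (hc : Continuous c) (hw : Continuous w) (k a a' : ℝ) :
    IntervalIntegrable (fun t => (k - c t) * w t) MeasureTheory.volume a a' :=
  ((continuous_const.sub hc).mul hw).intervalIntegrable a a'

@[simp]
theorem excessCostIntegral_zero : excessCostIntegral c w 0 = 0 := by
  simp [excessCostIntegral]

theorem excessCostIntegral_eq_sub (hc : Continuous c) (hw : Continuous w) (b : ℝ) :
    excessCostIntegral c w b = c b * (∫ t in (-b)..b, w t) - ∫ t in (-b)..b, c t * w t := by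
  simp only [excessCostIntegral, sub_mul]
  rw [intervalIntegral.integral_sub (Continuous.intervalIntegrable (by fun_prop) _ _)
      (Continuous.intervalIntegrable (by fun_prop) _ _), intervalIntegral.integral_const_mul]

theorem continuous_integral_neg_self {f : ℝ → ℝ} (hf : Continuous f) :
    Continuous fun b => ∫ t in (-b)..b, f t := by
  have hF := intervalIntegral.continuous_primitive (μ := MeasureTheory.volume)
    (hf.intervalIntegrable ·) 0
  have h : ∀ b,
      (∫ t in (-b)..b, f t) = (∫ t in (0 : ℝ)..b, f t) - ∫ t in (0 : ℝ)..(-b), f t :=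
    fun b => (intervalIntegral.integral_interval_sub_left
      (hf.intervalIntegrable _ _) (hf.intervalIntegrable _ _)).symm
  simp_rw [h]
  exact hF.sub (hF.comp continuous_neg)

theorem continuous_excessCostIntegral (hc : Continuous c) (hw : Continuous w) :
    Continuous (excessCostIntegral c w) := by
  simp_rw [funext (excessCostIntegral_eq_sub hc hw)]
  exact (hc.mul (continuous_integral_neg_self hw)).sub (continuous_integral_neg_self (hc.mul hw))

theorem excessCostIntegrand_nonneg (hw0 : ∀ t, 0 ≤ w t) (hceven : ∀ x, c (-x) = c x)
    (hcmono : MonotoneOn c (Set.Ici 0)) {b t : ℝ} (ht : t ∈ Set.Icc (-b) b) :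
    0 ≤ (c b - c t) * w t :=
  mul_nonneg (sub_nonneg.2 (apply_le_apply_of_abs_le hceven hcmono (abs_le.2 ht))) (hw0 t)

theorem strictMonoOn_excessCostIntegral (hc : Continuous c) (hw : Continuous w)
    (hwpos : ∀ t, 0 < w t) (hceven : ∀ x, c (-x) = c x) (hcmono : StrictMonoOn c (Set.Ici 0)) :
    StrictMonoOn (excessCostIntegral c w) (Set.Ici 0) := by
  intro a (ha : 0 ≤ a) b (hb : 0 ≤ b) hab
  have hcab : c a < c b := hcmono ha hb hab
  calc excessCostIntegral c w a
      ≤ ∫ t in (-a)..a, (c b - c t) * w t := by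
        refine intervalIntegral.integral_mono_on (by linarith)
          (intervalIntegrable_sub_mul hc hw _ _ _) (intervalIntegrable_sub_mul hc hw _ _ _)
          fun t _ => ?_
        gcongr
        exact (hwpos t).le
    _ ≤ ∫ t in (-b)..a, (c b - c t) * w t := by
        refine intervalIntegral.integral_mono_interval (by linarith) (by linarith) le_rfl
          ((MeasureTheory.ae_restrict_mem measurableSet_Ioc).mono fun t ht => ?_)
          (intervalIntegrable_sub_mul hc hw _ _ _)
        exact excessCostIntegrand_nonneg (fun t => (hwpos t).le) hceven hcmono.monotoneOn
          ⟨ht.1.le, ht.2.trans hab.le⟩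
    _ < (∫ t in (-b)..a, (c b - c t) * w t) + ∫ t in a..b, (c b - c t) * w t := by
        refine lt_add_of_pos_right _ (intervalIntegral.intervalIntegral_pos_of_pos_on
          (intervalIntegrable_sub_mul hc hw _ _ _) (fun t ht => ?_) hab)
        exact mul_pos (sub_pos.2 (hcmono (ha.trans ht.1.le) hb ht.2)) (hwpos t)
    _ = excessCostIntegral c w b :=
        intervalIntegral.integral_add_adjacent_intervals (intervalIntegrable_sub_mul hc hw _ _ _)
          (intervalIntegrable_sub_mul hc hw _ _ _)

theorem tendsto_excessCostIntegral_atTop (hc : Continuous c) (hw : Continuous w)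
    (hwpos : ∀ t, 0 < w t) (hceven : ∀ x, c (-x) = c x) (hcmono : MonotoneOn c (Set.Ici 0))
    (hctop : Tendsto c atTop atTop) :
    Tendsto (excessCostIntegral c w) atTop atTop := by
  have hm : 0 < ∫ t in (0 : ℝ)..1, w t :=
    intervalIntegral.intervalIntegral_pos_of_pos_on (hw.intervalIntegrable _ _) (fun t _ => hwpos t)
      one_pos
  have hlin : Tendsto (fun b => (c b - c 1) * ∫ t in (0 : ℝ)..1, w t) atTop atTop :=
    (tendsto_atTop_add_const_right _ _ hctop).atTop_mul_const hm
  refine tendsto_atTop_mono' _ ((eventually_ge_atTop 1).mono fun b hb => ?_) hlin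
  calc (c b - c 1) * ∫ t in (0 : ℝ)..1, w t
      = ∫ t in (0 : ℝ)..1, (c b - c 1) * w t := (intervalIntegral.integral_const_mul _ _).symm
    _ ≤ ∫ t in (0 : ℝ)..1, (c b - c t) * w t := by
        refine intervalIntegral.integral_mono_on zero_le_one
          ((continuous_const.mul hw).intervalIntegrable _ _)
          (intervalIntegrable_sub_mul hc hw _ _ _) fun t ht => ?_
        have hct : c t ≤ c 1 := hcmono ht.1 (Set.mem_Ici.2 zero_le_one) ht.2
        gcongr
        exact (hwpos t).le
    _ ≤ excessCostIntegral c w b :=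
        intervalIntegral.integral_mono_interval (by linarith) zero_le_one hb
          ((MeasureTheory.ae_restrict_mem measurableSet_Ioc).mono fun t ht =>
            excessCostIntegrand_nonneg (fun t => (hwpos t).le) hceven hcmono ⟨ht.1.le, ht.2⟩)
          (intervalIntegrable_sub_mul hc hw _ _ _)

end excessCostIntegral

theorem stmt12_general (σ c : ℝ → ℝ)
    (hσcont : Continuous σ) (hσpos : ∀ x, 0 < σ x)
    (hccont : Continuous c) (hceven : ∀ x, c (-x) = c x)
    (hcmono : StrictMonoOn c (Set.Ici 0)) (hctop : Tendsto c atTop atTop)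
    (q : ℝ) (hq : 0 < q)
    (ghat : ℝ → ℝ)
    (hghat : ∀ b, ghat b = q + (∫ t in (-b)..b, c t / σ t ^ 2)
        - c b * ∫ t in (-b)..b, 1 / σ t ^ 2) :
    ∃! bstar : ℝ, 0 < bstar ∧ ghat bstar = 0 ∧
      (∀ b, 0 < b → b < bstar → 0 < ghat b) ∧
      (∀ b, bstar < b → ghat b < 0) := by
  set w : ℝ → ℝ := fun t => 1 / σ t ^ 2
  have hw : Continuous w :=
    continuous_const.div (hσcont.pow 2) fun t => by have := hσpos t; positivity
  have hwpos : ∀ t, 0 < w t := fun t => by have := hσpos t; positivity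
  have hghat' : ghat = fun b => q - excessCostIntegral c w b := by
    funext b
    simp only [hghat, excessCostIntegral_eq_sub hccont hw, w, mul_one_div]
    ring
  subst hghat'
  refine existsUnique_pos_root_of_strictAntiOn
    (continuous_const.sub (continuous_excessCostIntegral hccont hw))
    (fun a ha b hb hab => sub_lt_sub_left
      (strictMonoOn_excessCostIntegral hccont hw hwpos hceven hcmono ha hb hab) q)
    (by simpa using hq) ?_
  simp_rw [sub_eq_add_neg]
  exact tendsto_atBot_add_const_left _ q <| tendsto_neg_atTop_atBot.comp <|
    tendsto_excessCostIntegral_atTop hccont hw hwpos hceven hcmono.monotoneOn hctop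

theorem stmt12 (σ c : ℝ → ℝ)
    (hσcont : Continuous σ) (hσpos : ∀ x, 0 < σ x) (hσeven : ∀ x, σ (-x) = σ x)
    (hccont : Continuous c) (hceven : ∀ x, c (-x) = c x)
    (hcmono : StrictMonoOn c (Set.Ici 0)) (hctop : Tendsto c atTop atTop)
    (q : ℝ) (hq : 0 < q)
    (ghat : ℝ → ℝ)
    (hghat : ∀ b, ghat b = q + (∫ t in (-b)..b, c t / σ t ^ 2)
        - c b * ∫ t in (-b)..b, 1 / σ t ^ 2) :
    ∃! bstar : ℝ, 0 < bstar ∧ ghat bstar = 0 ∧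
      (∀ b, 0 < b → b < bstar → 0 < ghat b) ∧
      (∀ b, bstar < b → ghat b < 0) :=
  stmt12_general σ c hσcont hσpos hccont hceven hcmono hctop q hq ghat hghat
end

section
/- Let σ > 0 and c : ℝ → ℝ continuous with c strictly decreasing on (-∞,0), strictly increasing on (0,∞). Let a* < 0 < b* satisfy λ* := c(a*) = c(b*), and let v ∈ C²(ℝ) satisfy (σ²(x)/2)·v''(x) = λ* - c(x) on (a*, b*), v''(x) = 0 outside [a*, b*] (v linear there), with v'(a*) = -q_u, v'(b*) = q_d where q_u, q_d ≥ 0. Then v is convex on ℝ and -q_u ≤ v'(x) ≤ q_d for all x ∈ ℝ. -/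
/-!
Off the three points `a*`, `0`, `b*` the second derivative has a sign: it vanishes outside
`[a*, b*]`, and inside `(a*, b*)` the equation gives `v'' = 2 (λ* - c) / σ² > 0` because `c`
lies strictly below its common value `λ*` at the endpoints of its valley. Being continuous,
`v''` is then nonnegative everywhere, so `v` is convex and `v'` is nondecreasing. Since `v'`
is constant on each half-line outside `[a*, b*]`, it stays between `v'(a*)` and `v'(b*)`.
-/

open Real

lemma nonneg_of_continuous_of_nonneg_off_finite {f : ℝ → ℝ} (hf : Continuous f)
    {s : Set ℝ} (hs : s.Finite) (h : ∀ x ∉ s, 0 ≤ f x) (x : ℝ) : 0 ≤ f x :=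
  (hs.countable.dense_compl ℝ).induction h (isClosed_le continuous_const hf) x

lemma lt_of_mem_Ioo_of_strictAntiOn_of_strictMonoOn {c : ℝ → ℝ}
    (hcanti : StrictAntiOn c (Set.Iio 0)) (hcmono : StrictMonoOn c (Set.Ioi 0))
    {a b x : ℝ} (ha : a < 0) (hb : 0 < b) (hab : c a = c b)
    (hx : x ∈ Set.Ioo a b) (hx0 : x ≠ 0) : c x < c a := by
  rcases hx0.lt_or_gt with hneg | hpos
  · exact hcanti (Set.mem_Iio.mpr ha) (Set.mem_Iio.mpr hneg) hx.1
  · exact hab ▸ hcmono (Set.mem_Ioi.mpr hpos) (Set.mem_Ioi.mpr hb) hx.2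

lemma mem_Icc_of_monotone_of_deriv_eq_zero_off {f : ℝ → ℝ} (hf : Differentiable ℝ f)
    (hmono : Monotone f) {a b : ℝ} (hzero : ∀ x, x < a ∨ b < x → deriv f x = 0) (x : ℝ) :
    f x ∈ Set.Icc (f a) (f b) := by
  have hleft : AntitoneOn f (Set.Iic a) :=
    antitoneOn_of_deriv_nonpos (convex_Iic a) hf.continuous.continuousOn hf.differentiableOn
      fun y hy => (hzero y (Or.inl (by simpa using hy))).le
  have hright : AntitoneOn f (Set.Ici b) :=
    antitoneOn_of_deriv_nonpos (convex_Ici b) hf.continuous.continuousOn hf.differentiableOn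
      fun y hy => (hzero y (Or.inr (by simpa using hy))).le
  constructor
  · rcases le_total a x with hax | hxa
    · exact hmono hax
    · exact hleft (Set.mem_Iic.mpr hxa) (Set.mem_Iic.mpr le_rfl) hxa
  · rcases le_total x b with hxb | hbx
    · exact hmono hxb
    · exact hright (Set.mem_Ici.mpr le_rfl) (Set.mem_Ici.mpr hbx) hbx

theorem stmt13_general (σ c : ℝ → ℝ)
    (hσpos : ∀ x, 0 < σ x)
    (hcanti : StrictAntiOn c (Set.Iio 0)) (hcmono : StrictMonoOn c (Set.Ioi 0))
    (astar bstar lamstar qu qd : ℝ)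
    (ha : astar < 0) (hb : 0 < bstar)
    (hlam : lamstar = c astar) (hlam' : c astar = c bstar)
    (v : ℝ → ℝ) (hv : ContDiff ℝ 2 v)
    (hode : ∀ x ∈ Set.Ioo astar bstar,
      (σ x ^ 2 / 2) * deriv (deriv v) x = lamstar - c x)
    (hlin : ∀ x, x < astar ∨ bstar < x → deriv (deriv v) x = 0)
    (hva : deriv v astar = -qu) (hvb : deriv v bstar = qd) :
    ConvexOn ℝ Set.univ v ∧ ∀ x : ℝ, -qu ≤ deriv v x ∧ deriv v x ≤ qd := by
  have hv' : Differentiable ℝ (deriv v) := (hv.iterate_deriv' 1 1).differentiable one_ne_zero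
  have hv'' : Continuous (deriv (deriv v)) := (hv.iterate_deriv' 0 2).continuous
  have hpos : ∀ x, 0 ≤ deriv (deriv v) x := by
    refine nonneg_of_continuous_of_nonneg_off_finite hv'' (s := {astar, 0, bstar})
      (by simp) fun x hx => ?_
    simp only [Set.mem_insert_iff, Set.mem_singleton_iff, not_or] at hx
    obtain ⟨hxa, hx0, hxb⟩ := hx
    rcases Ne.lt_or_gt hxa with hlt | hax
    · exact (hlin x (Or.inl hlt)).ge
    rcases Ne.lt_or_gt hxb with hltb | hgt
    · have hc := lt_of_mem_Ioo_of_strictAntiOn_of_strictMonoOn hcanti hcmono ha hb hlam'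
        ⟨hax, hltb⟩ hx0
      refine nonneg_of_mul_nonneg_right ?_ (div_pos (pow_pos (hσpos x) 2) two_pos)
      rw [hode x ⟨hax, hltb⟩]
      linarith
    · exact (hlin x (Or.inr hgt)).ge
  refine ⟨convexOn_univ_of_deriv2_nonneg (hv.differentiable two_ne_zero) hv' hpos,
    fun x => ?_⟩
  simpa only [hva, hvb, Set.mem_Icc] using
    mem_Icc_of_monotone_of_deriv_eq_zero_off hv' (monotone_of_deriv_nonneg hv' hpos) hlin x

theorem stmt13 (σ c : ℝ → ℝ)
    (hσcont : Continuous σ) (hσpos : ∀ x, 0 < σ x)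
    (hccont : Continuous c)
    (hcanti : StrictAntiOn c (Set.Iio 0)) (hcmono : StrictMonoOn c (Set.Ioi 0))
    (astar bstar lamstar qu qd : ℝ)
    (ha : astar < 0) (hb : 0 < bstar)
    (hqu : 0 ≤ qu) (hqd : 0 ≤ qd)
    (hlam : lamstar = c astar) (hlam' : c astar = c bstar)
    (v : ℝ → ℝ) (hv : ContDiff ℝ 2 v)
    (hode : ∀ x ∈ Set.Ioo astar bstar,
      (σ x ^ 2 / 2) * deriv (deriv v) x = lamstar - c x)
    (hlin : ∀ x, x < astar ∨ bstar < x → deriv (deriv v) x = 0)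
    (hva : deriv v astar = -qu) (hvb : deriv v bstar = qd) :
    ConvexOn ℝ Set.univ v ∧ ∀ x : ℝ, -qu ≤ deriv v x ∧ deriv v x ≤ qd :=
  stmt13_general σ c hσpos hcanti hcmono astar bstar lamstar qu qd ha hb hlam hlam' v hv hode hlin
    hva hvb
end

section
/- Let π1 : ℝ → ℝ be continuous, strictly decreasing on (-∞, x̂1), strictly increasing on (x̂1, ∞), with π1(x) → ∞ as x → ∞. Let m' : ℝ → (0,∞) be continuous with m(-∞, b) := ∫_{-∞}^b m'(t)dt < ∞ and ∫_{-∞}^b |π1(t)|m'(t)dt < ∞ for all b. Define l1(b) = ∫_{-∞}^b (π1(b) - π1(t))m'(t)dt. Then l1(b) < 0 for all b ≤ x̂1, l1 is strictly increasing on (x̂1, ∞) with l1(b) → ∞ as b → ∞; hence l1 = 0 has a unique root b* > x̂1, and b* is the unique global minimizer of J1(b) = (1/m(-∞,b))·∫_{-∞}^b π1(t)m'(t)dt, with J1(b*) = π1(b*). -/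
open Real Filter MeasureTheory

theorem stmt14 (π1 m' : ℝ → ℝ) (xhat1 : ℝ)
    (hπ1cont : Continuous π1)
    (hπ1anti : StrictAntiOn π1 (Set.Iic xhat1))
    (hπ1mono : StrictMonoOn π1 (Set.Ici xhat1))
    (hπ1top : Tendsto π1 atTop atTop)
    (hm'cont : Continuous m') (hm'pos : ∀ x, 0 < m' x)
    (hm'int : ∀ b : ℝ, IntegrableOn m' (Set.Iic b))
    (hπm'int : ∀ b : ℝ, IntegrableOn (fun t => π1 t * m' t) (Set.Iic b))
    (l1 J1 : ℝ → ℝ)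
    (hl1 : ∀ b, l1 b = ∫ t in Set.Iic b, (π1 b - π1 t) * m' t)
    (hJ1 : ∀ b, J1 b = (1 / ∫ t in Set.Iic b, m' t) * ∫ t in Set.Iic b, π1 t * m' t) :
    (∀ b, b ≤ xhat1 → l1 b < 0) ∧
    StrictMonoOn l1 (Set.Ioi xhat1) ∧
    Tendsto l1 atTop atTop ∧
    ∃! bstar : ℝ, xhat1 < bstar ∧ l1 bstar = 0 ∧
      (∀ b : ℝ, b ≠ bstar → J1 bstar < J1 b) ∧
      J1 bstar = π1 bstar := by
  set M : ℝ → ℝ := fun b => ∫ t in Set.Iic b, m' t with hMdef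
  set F : ℝ → ℝ := fun b => ∫ t in Set.Iic b, π1 t * m' t with hFdef
  have hπm'cont : Continuous (fun t => π1 t * m' t) := hπ1cont.mul hm'cont
  -- difference formulas
  have hMdiff : ∀ a b : ℝ, M b - M a = ∫ x in a..b, m' x := fun a b =>
    intervalIntegral.integral_Iic_sub_Iic (hm'int a) (hm'int b)
  have hFdiff : ∀ a b : ℝ, F b - F a = ∫ x in a..b, π1 x * m' x := fun a b =>
    intervalIntegral.integral_Iic_sub_Iic (hπm'int a) (hπm'int b)
  -- l1 identity
  have hl1' : ∀ b, l1 b = π1 b * M b - F b := by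
    intro b
    rw [hl1 b]
    have h1 : IntegrableOn (fun t => π1 b * m' t) (Set.Iic b) := (hm'int b).const_mul _
    calc (∫ t in Set.Iic b, (π1 b - π1 t) * m' t)
        = ∫ t in Set.Iic b, (π1 b * m' t - π1 t * m' t) := by
          congr 1; funext t; ring
      _ = (∫ t in Set.Iic b, π1 b * m' t) - ∫ t in Set.Iic b, π1 t * m' t :=
          MeasureTheory.integral_sub h1 (hπm'int b)
      _ = π1 b * M b - F b := by rw [MeasureTheory.integral_const_mul]
  -- M positive
  have hMpos : ∀ b, 0 < M b := by
    intro b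
    have h1 : (0:ℝ) ≤ M (b-1) :=
      MeasureTheory.setIntegral_nonneg measurableSet_Iic fun x _ => (hm'pos x).le
    have h2 : 0 < ∫ x in (b-1)..b, m' x :=
      intervalIntegral.intervalIntegral_pos_of_pos (hm'cont.intervalIntegrable _ _)
        hm'pos (by linarith)
    have := hMdiff (b-1) b
    linarith
  -- interval integral splitting for l1
  have hkey : ∀ a b : ℝ, l1 b = π1 b * M a - F a + ∫ t in a..b, (π1 b - π1 t) * m' t := by
    intro a b
    have h2 : (∫ t in a..b, (π1 b - π1 t) * m' t)
        = π1 b * (∫ t in a..b, m' t) - ∫ t in a..b, π1 t * m' t := by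
      calc (∫ t in a..b, (π1 b - π1 t) * m' t)
          = ∫ t in a..b, (π1 b * m' t - π1 t * m' t) := by
            congr 1; funext t; ring
        _ = (∫ t in a..b, π1 b * m' t) - ∫ t in a..b, π1 t * m' t :=
            intervalIntegral.integral_sub ((hm'cont.intervalIntegrable a b).const_mul _)
              (hπm'cont.intervalIntegrable a b)
        _ = _ := by rw [intervalIntegral.integral_const_mul]
    have h3 := hMdiff a b
    have h4 := hFdiff a b
    have h5 : π1 b * M b - π1 b * M a = π1 b * ∫ x in a..b, m' x := by
      rw [← mul_sub, h3]
    rw [hl1' b, h2]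
    linarith
  -- part 1 : l1 < 0 on Iic xhat1
  have part1 : ∀ b, b ≤ xhat1 → l1 b < 0 := by
    intro b hb
    set f : ℝ → ℝ := fun t => (π1 b - π1 t) * m' t with hfdef
    have hfcont : Continuous f := (continuous_const.sub hπ1cont).mul hm'cont
    have hfint : IntegrableOn f (Set.Iic b) := by
      have h1 : IntegrableOn (fun t => π1 b * m' t) (Set.Iic b) := (hm'int b).const_mul _
      have h2 := h1.sub (hπm'int b)
      have heq : f = (fun t => π1 b * m' t) - fun t => π1 t * m' t := by
        funext t; simp [hfdef]; ring
      rw [heq]; exact h2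
    have hfint' : IntegrableOn f (Set.Iic (b-1)) :=
      hfint.mono_set (Set.Iic_subset_Iic.2 (by linarith))
    have hsplit : l1 b = (∫ t in Set.Iic (b-1), f t) + ∫ t in (b-1)..b, f t := by
      have := intervalIntegral.integral_Iic_sub_Iic hfint' hfint
      rw [hl1 b]; linarith
    have h1 : (∫ t in Set.Iic (b-1), f t) ≤ 0 := by
      refine MeasureTheory.setIntegral_nonpos measurableSet_Iic fun x hx => ?_
      have hx' : x < b := lt_of_le_of_lt hx (by linarith)
      have : π1 b < π1 x := hπ1anti (le_trans hx'.le hb) hb hx'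
      exact mul_nonpos_of_nonpos_of_nonneg (by linarith) (hm'pos x).le
    have h2 : (∫ t in (b-1)..b, f t) < 0 := by
      have : 0 < ∫ t in (b-1)..b, (-f) t := by
        refine intervalIntegral.intervalIntegral_pos_of_pos_on
          (hfcont.neg.intervalIntegrable _ _) (fun x hx => ?_) (by linarith)
        have : π1 b < π1 x := hπ1anti (le_trans hx.2.le hb) hb hx.2
        have := hm'pos x
        simp only [hfdef, Pi.neg_apply]
        nlinarith
      have heq : (∫ t in (b-1)..b, (-f) t) = -∫ t in (b-1)..b, f t :=
        intervalIntegral.integral_neg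
      linarith
    linarith
  -- part 2 : strict mono on Ioi
  have part2 : StrictMonoOn l1 (Set.Ioi xhat1) := by
    intro a ha b hb hab
    simp only [Set.mem_Ioi] at ha hb
    have hpos1 : 0 < (π1 b - π1 a) * M a := by
      have := hπ1mono (Set.mem_Ici.2 ha.le) (Set.mem_Ici.2 hb.le) hab
      exact mul_pos (by linarith) (hMpos a)
    have hpos2 : 0 ≤ ∫ t in a..b, (π1 b - π1 t) * m' t := by
      refine intervalIntegral.integral_nonneg hab.le fun u hu => ?_
      have h1 : π1 u ≤ π1 b := by
        rcases eq_or_lt_of_le hu.2 with h | h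
        · rw [h]
        · exact (hπ1mono (Set.mem_Ici.2 (ha.le.trans hu.1)) (Set.mem_Ici.2 hb.le) h).le
      exact mul_nonneg (by linarith) (hm'pos u).le
    have h1 := hkey a b
    have h2 := hl1' a
    nlinarith [mul_lt_mul_of_pos_right
      (hπ1mono (Set.mem_Ici.2 ha.le) (Set.mem_Ici.2 hb.le) hab) (hMpos a)]
  -- part 3 : tendsto atTop
  have part3 : Tendsto l1 atTop atTop := by
    set c : ℝ := xhat1 + 1 with hc
    have hlb : ∀ b, c ≤ b → M c * π1 b - F c ≤ l1 b := by
      intro b hbc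
      have h1 := hkey c b
      have hpos2 : 0 ≤ ∫ t in c..b, (π1 b - π1 t) * m' t := by
        refine intervalIntegral.integral_nonneg hbc fun u hu => ?_
        have h2 : π1 u ≤ π1 b := by
          rcases eq_or_lt_of_le hu.2 with h | h
          · rw [h]
          · exact (hπ1mono (Set.mem_Ici.2 (by linarith [hu.1]))
              (Set.mem_Ici.2 (by linarith)) h).le
        exact mul_nonneg (by linarith) (hm'pos u).le
      nlinarith
    have htend : Tendsto (fun b => M c * π1 b - F c) atTop atTop := by
      apply tendsto_atTop_add_const_right
      exact hπ1top.const_mul_atTop (hMpos c)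
    exact tendsto_atTop_mono' _ ((eventually_ge_atTop c).mono hlb) htend
  refine ⟨part1, part2, part3, ?_⟩
  -- continuity of M, F, l1
  have hMcont : Continuous M := by
    have : M = fun b => M 0 + ∫ x in (0:ℝ)..b, m' x := by
      funext b; have := hMdiff 0 b; linarith
    rw [this]
    exact continuous_const.add
      (intervalIntegral.continuous_primitive (fun a b => hm'cont.intervalIntegrable a b) 0)
  have hFcont : Continuous F := by
    have : F = fun b => F 0 + ∫ x in (0:ℝ)..b, π1 x * m' x := by
      funext b; have := hFdiff 0 b; linarith
    rw [this]
    exact continuous_const.add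
      (intervalIntegral.continuous_primitive (fun a b => hπm'cont.intervalIntegrable a b) 0)
  have hl1cont : Continuous l1 := by
    have : l1 = fun b => π1 b * M b - F b := funext hl1'
    rw [this]; exact (hπ1cont.mul hMcont).sub hFcont
  -- existence of root
  have hneg : l1 xhat1 < 0 := part1 xhat1 le_rfl
  obtain ⟨B, hB1, hB2⟩ : ∃ B, 0 < l1 B ∧ xhat1 < B :=
    ((part3.eventually_gt_atTop 0).and (eventually_gt_atTop xhat1)).exists
  obtain ⟨bstar, hbmem, hbeq⟩ : ∃ x ∈ Set.Icc xhat1 B, l1 x = 0 :=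
    intermediate_value_Icc hB2.le hl1cont.continuousOn ⟨hneg.le, hB1.le⟩
  have hbgt : xhat1 < bstar := by
    rcases eq_or_lt_of_le hbmem.1 with h | h
    · exfalso; rw [← h] at hbeq; linarith
    · exact h
  -- sign of l1
  have hsneg : ∀ x, x < bstar → l1 x < 0 := by
    intro x hx
    rcases le_or_gt x xhat1 with h | h
    · exact part1 x h
    · have := part2 (Set.mem_Ioi.2 h) (Set.mem_Ioi.2 hbgt) hx
      linarith
  have hspos : ∀ x, bstar < x → 0 < l1 x := by
    intro x hx
    have := part2 (Set.mem_Ioi.2 hbgt) (Set.mem_Ioi.2 (hbgt.trans hx)) hx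
    linarith
  -- J1 identity and derivative
  have hJ1' : ∀ b, J1 b = F b / M b := by
    intro b; rw [hJ1 b, one_div, inv_mul_eq_div]
  have hJ1fun : J1 = fun b => F b / M b := funext hJ1'
  have hMd : ∀ b, HasDerivAt M (m' b) b := by
    intro b
    have h := intervalIntegral.integral_hasDerivAt_right (hm'cont.intervalIntegrable 0 b)
      (hm'cont.stronglyMeasurableAtFilter _ _) hm'cont.continuousAt
    have heq : M = fun u => M 0 + ∫ x in (0:ℝ)..u, m' x := by
      funext u; have := hMdiff 0 u; linarith
    rw [heq]
    exact h.const_add (M 0)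
  have hFd : ∀ b, HasDerivAt F (π1 b * m' b) b := by
    intro b
    have h := intervalIntegral.integral_hasDerivAt_right (hπm'cont.intervalIntegrable 0 b)
      (hπm'cont.stronglyMeasurableAtFilter _ _) hπm'cont.continuousAt
    have heq : F = fun u => F 0 + ∫ x in (0:ℝ)..u, π1 x * m' x := by
      funext u; have := hFdiff 0 u; linarith
    rw [heq]
    exact h.const_add (F 0)
  have hJ1d : ∀ b, HasDerivAt J1 (m' b * l1 b / (M b)^2) b := by
    intro b
    have h := (hFd b).div (hMd b) (hMpos b).ne'
    rw [hJ1fun]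
    have e : m' b * l1 b / (M b)^2 = (π1 b * m' b * M b - F b * m' b) / M b ^ 2 := by
      rw [hl1' b]; ring
    rw [e]; exact h
  have hJ1c : Continuous J1 :=
    continuous_iff_continuousAt.2 fun x => (hJ1d x).continuousAt
  have hderiv : ∀ b, deriv J1 b = m' b * l1 b / (M b)^2 := fun b => (hJ1d b).deriv
  -- strict monotonicity of J1 on both sides
  have hanti : StrictAntiOn J1 (Set.Iic bstar) := by
    refine strictAntiOn_of_deriv_neg (convex_Iic bstar) hJ1c.continuousOn fun x hx => ?_
    rw [interior_Iic] at hx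
    rw [hderiv x]
    exact div_neg_of_neg_of_pos
      (mul_neg_of_pos_of_neg (hm'pos x) (hsneg x hx)) (pow_pos (hMpos x) 2)
  have hmono : StrictMonoOn J1 (Set.Ici bstar) := by
    refine strictMonoOn_of_deriv_pos (convex_Ici bstar) hJ1c.continuousOn fun x hx => ?_
    rw [interior_Ici] at hx
    rw [hderiv x]
    exact div_pos (mul_pos (hm'pos x) (hspos x hx)) (pow_pos (hMpos x) 2)
  have hmin : ∀ b : ℝ, b ≠ bstar → J1 bstar < J1 b := by
    intro b hb
    rcases lt_or_gt_of_ne hb with h | h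
    · exact hanti (Set.mem_Iic.2 h.le) (Set.mem_Iic.2 le_rfl) h
    · exact hmono (Set.mem_Ici.2 le_rfl) (Set.mem_Ici.2 h.le) h
  have hval : J1 bstar = π1 bstar := by
    have h1 := hl1' bstar
    rw [hbeq] at h1
    rw [hJ1' bstar, div_eq_iff (hMpos bstar).ne']
    linarith
  refine ⟨bstar, ⟨hbgt, hbeq, hmin, hval⟩, ?_⟩
  rintro b' ⟨hb'gt, hb'eq, -, -⟩
  exact part2.injOn (Set.mem_Ioi.2 hb'gt) (Set.mem_Ioi.2 hbgt) (hb'eq.trans hbeq.symm)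
end

section
/- Let π2 : ℝ → ℝ be continuous, strictly decreasing on (-∞, x̂2), strictly increasing on (x̂2, ∞), with π2(x) → ∞ as x → -∞. Let m' : ℝ → (0,∞) be continuous with m(a, ∞) := ∫ₐ^∞ m'(t)dt < ∞ and ∫ₐ^∞ |π2(t)|m'(t)dt < ∞ for all a. Define l2(a) = ∫ₐ^∞ (π2(t) - π2(a))m'(t)dt. Then l2(a) > 0 for all a ≥ x̂2, l2 is strictly increasing on (-∞, x̂2) with l2(a) → -∞ as a → -∞; hence l2 = 0 has a unique root a* < x̂2, which is the unique global minimizer of J2(a) = (1/m(a,∞))·∫ₐ^∞ π2(t)m'(t)dt, and J2(a*) = π2(a*). -/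
/-!
Write `M a = ∫_a^∞ m'` and `E_c(a) = ∫_a^∞ (π2 t - c) m'(t) dt`, so that `l2 a = E_{π2 a}(a)` and
`J2 a - c = E_c(a) / M a`. Moving the base point changes `E_c` by `∫_a^b (π2 - c) m'`, and changing
`c` changes it by a multiple of `M`. Where `π2` decreases this gives
`l2 a ≤ l2 b - (π2 a - π2 b) M b` for `a ≤ b ≤ x̂2`, hence strict monotonicity and `l2 → -∞`;
continuity and `l2 x̂2 > 0` then produce a root `a*`. With `c = π2 a*` we have `E_c(a*) = 0`, so
`J2 a* = c`, and `E_c(a) > 0` for `a ≠ a*` because the integrand of `E_c(a) - E_c(a*)` has a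
constant sign between `a` and `a*`, unless `a > a*` and `π2 a ≥ c`, in which case `a > x̂2` and the
integrand of `E_c(a)` itself is positive.
-/

open Filter MeasureTheory Set

lemma setIntegral_pos_of_pos_on {X : Type*} [MeasurableSpace X] {μ : Measure X} {s : Set X}
    {f : X → ℝ} (hs : MeasurableSet s) (hμs : μ s ≠ 0) (hf : IntegrableOn f s μ)
    (hpos : ∀ x ∈ s, 0 < f x) : 0 < ∫ x in s, f x ∂μ := by
  rw [setIntegral_pos_iff_support_of_nonneg_ae
    ((ae_restrict_iff' hs).2 (.of_forall fun x hx => (hpos x hx).le)) hf,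
    inter_eq_right.2 fun x hx => Function.mem_support.2 (hpos x hx).ne']
  exact pos_iff_ne_zero.2 hμs

section TailIntegral

variable {f : ℝ → ℝ} {a : ℝ}

lemma integral_Ici_pos_of_pos_on (hf : IntegrableOn f (Ici a)) (hpos : ∀ t > a, 0 < f t) :
    0 < ∫ t in Ici a, f t := by
  rw [integral_Ici_eq_integral_Ioi]
  exact setIntegral_pos_of_pos_on measurableSet_Ioi (by simp) (hf.mono_set Ioi_subset_Ici_self)
    hpos

lemma intervalIntegrable_of_integrableOn_Ici (hf : ∀ a, IntegrableOn f (Ici a)) (a b : ℝ) :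
    IntervalIntegrable f volume a b :=
  ((hf (a ⊓ b)).mono_set Icc_subset_Ici_self).intervalIntegrable

end TailIntegral

noncomputable def excessTail (p m : ℝ → ℝ) (c a : ℝ) : ℝ := ∫ t in Ici a, (p t - c) * m t

section ExcessTail

variable {p m : ℝ → ℝ} {s : Set ℝ} {a : ℝ}

lemma integrableOn_sub_const_mul (hm : IntegrableOn m s)
    (hpm : IntegrableOn (fun t => p t * m t) s) (c : ℝ) :
    IntegrableOn (fun t => (p t - c) * m t) s := by
  simpa only [sub_mul, Pi.sub_def] using hpm.sub (hm.const_mul c)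

lemma excessTail_eq (hm : IntegrableOn m (Ici a)) (hpm : IntegrableOn (fun t => p t * m t) (Ici a))
    (c : ℝ) :
    excessTail p m c a = (∫ t in Ici a, p t * m t) - c * ∫ t in Ici a, m t := by
  simp_rw [excessTail, sub_mul]
  rw [integral_sub hpm (hm.const_mul c), integral_const_mul]

lemma excessTail_eq_add (hm : IntegrableOn m (Ici a))
    (hpm : IntegrableOn (fun t => p t * m t) (Ici a)) (c d : ℝ) :
    excessTail p m c a = excessTail p m d a + (d - c) * ∫ t in Ici a, m t := by
  rw [excessTail_eq hm hpm, excessTail_eq hm hpm]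
  ring

lemma excessTail_sub_excessTail (hm : ∀ a, IntegrableOn m (Ici a))
    (hpm : ∀ a, IntegrableOn (fun t => p t * m t) (Ici a)) (c a b : ℝ) :
    excessTail p m c a - excessTail p m c b = ∫ t in a..b, (p t - c) * m t :=
  intervalIntegral.integral_Ici_sub_Ici' (integrableOn_sub_const_mul (hm a) (hpm a) c)
    (integrableOn_sub_const_mul (hm b) (hpm b) c)

lemma excessTail_pos_of_lt {c : ℝ} (hm_pos : ∀ t, 0 < m t)
    (hint : IntegrableOn (fun t => (p t - c) * m t) (Ici a)) (hlt : ∀ t > a, c < p t) :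
    0 < excessTail p m c a :=
  integral_Ici_pos_of_pos_on hint fun t ht => mul_pos (sub_pos.2 (hlt t ht)) (hm_pos t)

lemma continuousOn_excessTail_self (hp : Continuous p) (hm : ∀ a, IntegrableOn m (Ici a))
    (hpm : ∀ a, IntegrableOn (fun t => p t * m t) (Ici a)) (a₀ : ℝ) :
    ContinuousOn (fun a => excessTail p m (p a) a) (Ici a₀) := by
  have hG := (hpm a₀).continuousOn_Ici_primitive_Ici
  have hM := (hm a₀).continuousOn_Ici_primitive_Ici
  refine (hG.sub (hp.continuousOn.mul hM)).congr fun a _ => ?_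
  exact excessTail_eq (hm a) (hpm a) (p a)

end ExcessTail

section Valley

variable {p m : ℝ → ℝ} {x₀ a b r : ℝ}

lemma excessTail_self_pos (hmono : StrictMonoOn p (Ici x₀)) (hm_pos : ∀ t, 0 < m t)
    (hm : IntegrableOn m (Ici a)) (hpm : IntegrableOn (fun t => p t * m t) (Ici a))
    (ha : x₀ ≤ a) : 0 < excessTail p m (p a) a :=
  excessTail_pos_of_lt hm_pos (integrableOn_sub_const_mul hm hpm (p a)) fun _ ht =>
    hmono ha (ha.trans ht.le) ht

lemma excessTail_self_le (hanti : StrictAntiOn p (Iic x₀)) (hm_pos : ∀ t, 0 < m t)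
    (hm : ∀ a, IntegrableOn m (Ici a)) (hpm : ∀ a, IntegrableOn (fun t => p t * m t) (Ici a))
    (hab : a ≤ b) (hb : b ≤ x₀) :
    excessTail p m (p a) a ≤ excessTail p m (p b) b - (p a - p b) * ∫ t in Ici b, m t := by
  have hshift := excessTail_eq_add (hm b) (hpm b) (p a) (p b)
  have hstep := excessTail_sub_excessTail hm hpm (p a) a b
  have hnonpos : 0 ≤ ∫ t in a..b, -((p t - p a) * m t) :=
    intervalIntegral.integral_nonneg hab fun t ht => neg_nonneg.2 <|
      mul_nonpos_of_nonpos_of_nonneg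
        (sub_nonpos.2 (hanti.antitoneOn (hab.trans hb) (ht.2.trans hb) ht.1)) (hm_pos t).le
  rw [intervalIntegral.integral_neg] at hnonpos
  linarith

lemma strictMonoOn_excessTail_self (hanti : StrictAntiOn p (Iic x₀)) (hm_pos : ∀ t, 0 < m t)
    (hm : ∀ a, IntegrableOn m (Ici a)) (hpm : ∀ a, IntegrableOn (fun t => p t * m t) (Ici a)) :
    StrictMonoOn (fun a => excessTail p m (p a) a) (Iio x₀) := by
  intro a _ b hb hab
  have hM : 0 < ∫ t in Ici b, m t := integral_Ici_pos_of_pos_on (hm b) fun t _ => hm_pos t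
  have hp : p b < p a := hanti (Iio_subset_Iic_self (hab.trans hb)) (Iio_subset_Iic_self hb) hab
  have := excessTail_self_le hanti hm_pos hm hpm hab.le (Iio_subset_Iic_self hb)
  nlinarith

lemma tendsto_excessTail_self_atBot (hanti : StrictAntiOn p (Iic x₀))
    (hbot : Tendsto p atBot atTop) (hm_pos : ∀ t, 0 < m t) (hm : ∀ a, IntegrableOn m (Ici a))
    (hpm : ∀ a, IntegrableOn (fun t => p t * m t) (Ici a)) :
    Tendsto (fun a => excessTail p m (p a) a) atBot atBot := by
  have hM : 0 < ∫ t in Ici x₀, m t := integral_Ici_pos_of_pos_on (hm x₀) fun t _ => hm_pos t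
  have hbound : Tendsto (fun a => excessTail p m (p x₀) x₀ - (p a - p x₀) * ∫ t in Ici x₀, m t)
      atBot atBot := by
    simpa only [sub_eq_add_neg, Function.comp_def] using tendsto_atBot_add_const_left _ _ <|
      tendsto_neg_atTop_atBot.comp <|
        (tendsto_atTop_add_const_right _ _ hbot).atTop_mul_const hM
  refine tendsto_atBot_mono' atBot ?_ hbound
  filter_upwards [eventually_le_atBot x₀] with a ha
  exact excessTail_self_le hanti hm_pos hm hpm ha le_rfl

lemma exists_excessTail_self_eq_zero (hp : Continuous p) (hanti : StrictAntiOn p (Iic x₀))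
    (hmono : StrictMonoOn p (Ici x₀)) (hbot : Tendsto p atBot atTop) (hm_pos : ∀ t, 0 < m t)
    (hm : ∀ a, IntegrableOn m (Ici a)) (hpm : ∀ a, IntegrableOn (fun t => p t * m t) (Ici a)) :
    ∃ r < x₀, excessTail p m (p r) r = 0 := by
  have hpos := excessTail_self_pos hmono hm_pos (hm x₀) (hpm x₀) le_rfl
  obtain ⟨b, hneg, hb⟩ := (((tendsto_excessTail_self_atBot hanti hbot hm_pos hm hpm).eventually
    (eventually_lt_atBot 0)).and (eventually_le_atBot x₀)).exists
  obtain ⟨r, hr, hroot⟩ := intermediate_value_Icc hb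
    ((continuousOn_excessTail_self hp hm hpm b).mono Icc_subset_Ici_self) ⟨hneg.le, hpos.le⟩
  refine ⟨r, hr.2.lt_of_ne ?_, hroot⟩
  rintro rfl
  exact hpos.ne' hroot

lemma excessTail_pos_of_lt_root (hanti : StrictAntiOn p (Iic x₀)) (hm_pos : ∀ t, 0 < m t)
    (hm : ∀ a, IntegrableOn m (Ici a)) (hpm : ∀ a, IntegrableOn (fun t => p t * m t) (Ici a))
    (hr : r < x₀) (hroot : excessTail p m (p r) r = 0) (har : a < r) :
    0 < excessTail p m (p r) a := by
  have hint := intervalIntegrable_of_integrableOn_Ici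
    (fun b => integrableOn_sub_const_mul (hm b) (hpm b) (p r)) a r
  have hpos := intervalIntegral.intervalIntegral_pos_of_pos_on hint (fun t ht => mul_pos
    (sub_pos.2 (hanti (ht.2.trans hr).le hr.le ht.2)) (hm_pos t)) har
  linarith [excessTail_sub_excessTail hm hpm (p r) a r]

lemma excessTail_pos_of_root_lt (hanti : StrictAntiOn p (Iic x₀))
    (hmono : StrictMonoOn p (Ici x₀)) (hm_pos : ∀ t, 0 < m t)
    (hm : ∀ a, IntegrableOn m (Ici a)) (hpm : ∀ a, IntegrableOn (fun t => p t * m t) (Ici a))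
    (hr : r < x₀) (hroot : excessTail p m (p r) r = 0) (hra : r < a) :
    0 < excessTail p m (p r) a := by
  by_cases hpa : p r ≤ p a
  · have hxa : x₀ < a := by
      by_contra! hax
      exact (hanti hr.le hax hra).not_ge hpa
    exact excessTail_pos_of_lt hm_pos (integrableOn_sub_const_mul (hm a) (hpm a) (p r))
      fun t ht => hpa.trans_lt (hmono hxa.le (hxa.trans ht).le ht)
  · have hbelow : ∀ t ∈ Ioo r a, p t < p r := by
      intro t ht
      rcases le_total t x₀ with htx | hxt
      · exact hanti hr.le htx ht.1
      · exact (hmono.monotoneOn hxt (hxt.trans ht.2.le) ht.2.le).trans_lt (not_le.1 hpa)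
    have hint := (intervalIntegrable_of_integrableOn_Ici
      (fun b => integrableOn_sub_const_mul (hm b) (hpm b) (p r)) r a).neg
    have hpos := intervalIntegral.intervalIntegral_pos_of_pos_on
      (f := fun t => -((p t - p r) * m t)) hint (fun t ht => neg_pos.2 <|
      mul_neg_of_neg_of_pos (sub_neg.2 (hbelow t ht)) (hm_pos t)) hra
    rw [intervalIntegral.integral_neg] at hpos
    linarith [excessTail_sub_excessTail hm hpm (p r) r a]

end Valley

theorem stmt15_general (π2 m' : ℝ → ℝ) (xhat2 : ℝ)
    (hπ2cont : Continuous π2)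
    (hπ2anti : StrictAntiOn π2 (Set.Iic xhat2))
    (hπ2mono : StrictMonoOn π2 (Set.Ici xhat2))
    (hπ2bot : Tendsto π2 atBot atTop)
    (hm'pos : ∀ x, 0 < m' x)
    (hm'int : ∀ a : ℝ, IntegrableOn m' (Set.Ici a))
    (hπm'int : ∀ a : ℝ, IntegrableOn (fun t => π2 t * m' t) (Set.Ici a))
    (l2 J2 : ℝ → ℝ)
    (hl2 : ∀ a, l2 a = ∫ t in Set.Ici a, (π2 t - π2 a) * m' t)
    (hJ2 : ∀ a, J2 a = (1 / ∫ t in Set.Ici a, m' t) * ∫ t in Set.Ici a, π2 t * m' t) :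
    (∀ a, xhat2 ≤ a → 0 < l2 a) ∧
    StrictMonoOn l2 (Set.Iio xhat2) ∧
    Tendsto l2 atBot atBot ∧
    ∃! astar : ℝ, astar < xhat2 ∧ l2 astar = 0 ∧
      (∀ a : ℝ, a ≠ astar → J2 astar < J2 a) ∧
      J2 astar = π2 astar := by
  obtain rfl : l2 = fun a => excessTail π2 m' (π2 a) a := funext hl2
  have hM : ∀ a, 0 < ∫ t in Ici a, m' t := fun a =>
    integral_Ici_pos_of_pos_on (hm'int a) fun t _ => hm'pos t
  have hJ : ∀ a c, J2 a - c = excessTail π2 m' c a / ∫ t in Ici a, m' t := fun a c => by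
    rw [hJ2, excessTail_eq (hm'int a) (hπm'int a)]
    field_simp [(hM a).ne']
  have hmono := strictMonoOn_excessTail_self hπ2anti hm'pos hm'int hπm'int
  obtain ⟨r, hr, hroot⟩ :=
    exists_excessTail_self_eq_zero hπ2cont hπ2anti hπ2mono hπ2bot hm'pos hm'int hπm'int
  have hJr : J2 r = π2 r := sub_eq_zero.1 (by rw [hJ, hroot, zero_div])
  refine ⟨fun a ha => excessTail_self_pos hπ2mono hm'pos (hm'int a) (hπm'int a) ha, hmono,
    tendsto_excessTail_self_atBot hπ2anti hπ2bot hm'pos hm'int hπm'int,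
    r, ⟨hr, hroot, fun a ha => ?_, hJr⟩,
    fun b hb => hmono.injOn hb.1 hr (hb.2.1.trans hroot.symm)⟩
  have hpos : 0 < excessTail π2 m' (π2 r) a := by
    rcases ha.lt_or_gt with har | hra
    · exact excessTail_pos_of_lt_root hπ2anti hm'pos hm'int hπm'int hr hroot har
    · exact excessTail_pos_of_root_lt hπ2anti hπ2mono hm'pos hm'int hπm'int hr hroot hra
  have := div_pos hpos (hM a)
  rw [← hJ] at this
  linarith

theorem stmt15 (π2 m' : ℝ → ℝ) (xhat2 : ℝ)
    (hπ2cont : Continuous π2)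
    (hπ2anti : StrictAntiOn π2 (Set.Iic xhat2))
    (hπ2mono : StrictMonoOn π2 (Set.Ici xhat2))
    (hπ2bot : Tendsto π2 atBot atTop)
    (hm'cont : Continuous m') (hm'pos : ∀ x, 0 < m' x)
    (hm'int : ∀ a : ℝ, IntegrableOn m' (Set.Ici a))
    (hπm'int : ∀ a : ℝ, IntegrableOn (fun t => π2 t * m' t) (Set.Ici a))
    (l2 J2 : ℝ → ℝ)
    (hl2 : ∀ a, l2 a = ∫ t in Set.Ici a, (π2 t - π2 a) * m' t)
    (hJ2 : ∀ a, J2 a = (1 / ∫ t in Set.Ici a, m' t) * ∫ t in Set.Ici a, π2 t * m' t) :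
    (∀ a, xhat2 ≤ a → 0 < l2 a) ∧
    StrictMonoOn l2 (Set.Iio xhat2) ∧
    Tendsto l2 atBot atBot ∧
    ∃! astar : ℝ, astar < xhat2 ∧ l2 astar = 0 ∧
      (∀ a : ℝ, a ≠ astar → J2 astar < J2 a) ∧
      J2 astar = π2 astar :=
  stmt15_general π2 m' xhat2 hπ2cont hπ2anti hπ2mono hπ2bot hm'pos hm'int hπm'int l2 J2 hl2 hJ2
end

section
/- Let v ∈ C²(ℝ) be convex and satisfy -q_u ≤ v'(x) ≤ q_d on ℝ, and suppose (σ²(x)/2)v''(x) + μ(x)v'(x) + c(x) = λ* on (a*, b*). Let σ̂ be continuous with σ̂²(x) > σ²(x) for all x, and let Ŝ', m̂' be the scale and speed densities associated with (μ, σ̂), satisfying ∫ₐᵇ μ m̂' = 1/Ŝ'(b) - 1/Ŝ'(a) and d/dx (v'(x)/Ŝ'(x)) = ((σ̂²(x)/2)v''(x) + μ(x)v'(x))·m̂'(x). Then for all a* ≤ a < b ≤ b*: λ* < (1/m̂(a,b))·(∫ₐᵇ c(t)m̂'(t)dt + q_d/Ŝ'(b) + q_u/Ŝ'(a)). -/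
open Real MeasureTheory

private lemma mono_deriv_nonneg {g : ℝ → ℝ} (hg : Monotone g) {d x : ℝ}
    (h : HasDerivAt g d x) : 0 ≤ d := by
  have h1 : Filter.Tendsto (slope g x) (nhdsWithin x (Set.Ioi x)) (nhds d) :=
    (hasDerivAt_iff_tendsto_slope.1 h).mono_left
      (nhdsWithin_mono _ (fun y hy => ne_of_gt hy))
  refine ge_of_tendsto h1 ?_
  filter_upwards [self_mem_nhdsWithin] with y hy
  have : x < y := hy
  rw [slope_def_field]
  exact div_nonneg (sub_nonneg.2 (hg this.le)) (sub_nonneg.2 this.le)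

theorem stmt18 (μ σ σhat c v Shat' mhat' : ℝ → ℝ)
    (astar bstar lamstar qu qd : ℝ) (hab : astar < bstar)
    (hv : ContDiff ℝ 2 v)
    (hconv : ConvexOn ℝ Set.univ v)
    (hv' : ∀ x, -qu ≤ deriv v x ∧ deriv v x ≤ qd)
    (hode : ∀ x ∈ Set.Ioo astar bstar,
      (σ x ^ 2 / 2) * deriv (deriv v) x + μ x * deriv v x + c x = lamstar)
    (hσhat : ∀ x, σ x ^ 2 < σhat x ^ 2)
    (hShat'pos : ∀ x, 0 < Shat' x) (hmhat'pos : ∀ x, 0 < mhat' x)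
    (hmhat'cont : Continuous mhat') (hccont : Continuous c)
    (hcanon : ∀ a b : ℝ, (∫ t in a..b, μ t * mhat' t) = 1 / Shat' b - 1 / Shat' a)
    (hscale : ∀ x, HasDerivAt (fun y => deriv v y / Shat' y)
      (((σhat x ^ 2 / 2) * deriv (deriv v) x + μ x * deriv v x) * mhat' x) x)
    (hpos : ∀ a b : ℝ, astar ≤ a → a < b → b ≤ bstar →
      0 < volume {x ∈ Set.Ioo a b | 0 < deriv (deriv v) x}) :
    ∀ a b : ℝ, astar ≤ a → a < b → b ≤ bstar →
      lamstar < (1 / ∫ t in a..b, mhat' t) *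
        ((∫ t in a..b, c t * mhat' t) + qd / Shat' b + qu / Shat' a) := by
  intro a b ha hab' hb
  -- differentiability facts
  have hvdiff : Differentiable ℝ v := hv.differentiable (by norm_num)
  have hv'diff : Differentiable ℝ (deriv v) :=
    (hv.iterate_deriv' 1 1).differentiable (by norm_num)
  -- second derivative nonneg
  have hmono : Monotone (deriv v) := by
    have := hconv.monotoneOn_deriv (fun x _ => hvdiff.differentiableAt)
    exact fun x y hxy => this (Set.mem_univ x) (Set.mem_univ y) hxy
  have hv''nonneg : ∀ x, 0 ≤ deriv (deriv v) x :=
    fun x => mono_deriv_nonneg hmono (hv'diff x).hasDerivAt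
  -- notation
  set f : ℝ → ℝ := fun y => deriv v y / Shat' y with hf
  set φ : ℝ → ℝ := fun t => (lamstar - c t) * mhat' t with hφ
  have hφcont : Continuous φ := ((continuous_const.sub hccont).mul hmhat'cont)
  set F : ℝ → ℝ := fun x => f x - ∫ t in a..x, φ t with hF
  set h : ℝ → ℝ := fun x => ((σhat x ^ 2 - σ x ^ 2) / 2 * deriv (deriv v) x) * mhat' x with hh
  have hhnonneg : ∀ x, 0 ≤ h x := by
    intro x
    have h1 : 0 ≤ (σhat x ^ 2 - σ x ^ 2) / 2 := by
      have := hσhat x; linarith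
    exact mul_nonneg (mul_nonneg h1 (hv''nonneg x)) (hmhat'pos x).le
  -- F has derivative h on Ioo a b
  have hFderiv : ∀ x ∈ Set.Ioo a b, HasDerivAt F (h x) x := by
    intro x hx
    have hxs : x ∈ Set.Ioo astar bstar :=
      ⟨lt_of_le_of_lt ha hx.1, lt_of_lt_of_le hx.2 hb⟩
    have hint : HasDerivAt (fun y => ∫ t in a..y, φ t) (φ x) x :=
      (hφcont.integral_hasStrictDerivAt a x).hasDerivAt
    have := (hscale x).sub hint
    have heq : ((σhat x ^ 2 / 2) * deriv (deriv v) x + μ x * deriv v x) * mhat' x - φ x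
        = h x := by
      have hode' := hode x hxs
      have hm : μ x * deriv v x = lamstar - c x - σ x ^ 2 / 2 * deriv (deriv v) x := by
        linarith
      simp only [hφ, hh]
      rw [hm]
      ring
    rwa [heq] at this
  -- F is monotone on Icc a b
  have hFcont : ContinuousOn F (Set.Icc a b) := by
    have : Continuous f := continuous_iff_continuousAt.2 fun x => (hscale x).continuousAt
    exact (this.sub (intervalIntegral.continuous_primitive
      (fun a b => hφcont.intervalIntegrable a b) a)).continuousOn
  have hFmono : MonotoneOn F (Set.Icc a b) := by
    apply monotoneOn_of_deriv_nonneg (convex_Icc a b) hFcont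
    · intro x hx
      rw [interior_Icc] at hx
      exact ((hFderiv x hx).differentiableAt).differentiableWithinAt
    · intro x hx
      rw [interior_Icc] at hx
      rw [(hFderiv x hx).deriv]
      exact hhnonneg x
  -- strict inequality F a < F b
  have hFstrict : F a < F b := by
    rcases lt_or_eq_of_le (hFmono (Set.left_mem_Icc.2 hab'.le)
      (Set.right_mem_Icc.2 hab'.le) hab'.le) with h1 | h1
    · exact h1
    · exfalso
      obtain ⟨x0, hx0⟩ := nonempty_of_measure_ne_zero (hpos a b ha hab' hb).ne'
      obtain ⟨hx0mem, hx0pos⟩ := hx0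
      have hconst : ∀ y ∈ Set.Icc a b, F y = F a := by
        intro y hy
        have h2 := hFmono (Set.left_mem_Icc.2 hab'.le) hy hy.1
        have h3 := hFmono hy (Set.right_mem_Icc.2 hab'.le) hy.2
        rw [← h1] at h3
        linarith
      have hnhds : Set.Icc a b ∈ nhds x0 := Icc_mem_nhds hx0mem.1 hx0mem.2
      have hF0 : HasDerivAt F 0 x0 := by
        have : F =ᶠ[nhds x0] fun _ => F a := by
          filter_upwards [hnhds] with y hy
          exact hconst y hy
        exact (hasDerivAt_const x0 (F a)).congr_of_eventuallyEq this
      have := (hFderiv x0 hx0mem).unique hF0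
      have hh0 : 0 < h x0 := by
        have h1' : 0 < (σhat x0 ^ 2 - σ x0 ^ 2) / 2 := by
          have := hσhat x0; linarith
        exact mul_pos (mul_pos h1' hx0pos) (hmhat'pos x0)
      rw [this] at hh0
      exact lt_irrefl 0 hh0
  -- unpack: ∫ φ < f b - f a
  have hkey : (∫ t in a..b, φ t) < f b - f a := by
    have : F a = f a - 0 := by
      simp [hF, intervalIntegral.integral_same]
    simp only [hF] at hFstrict
    linarith [hFstrict, intervalIntegral.integral_same (a := a) (f := φ) (μ := volume)]
  -- integral of φ
  have hφint : (∫ t in a..b, φ t)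
      = lamstar * (∫ t in a..b, mhat' t) - ∫ t in a..b, c t * mhat' t := by
    rw [← intervalIntegral.integral_const_mul, ← intervalIntegral.integral_sub (f := fun t => lamstar * mhat' t) (g := fun t => c t * mhat' t)
      ((continuous_const.mul hmhat'cont).intervalIntegrable a b)
      ((hccont.mul hmhat'cont).intervalIntegrable a b)]
    congr 1; ext t; simp [hφ]; ring
  -- bound f b - f a
  have hSb := hShat'pos b
  have hSa := hShat'pos a
  have hbound : f b - f a ≤ qd / Shat' b + qu / Shat' a := by
    have h1 : f b ≤ qd / Shat' b := by
      simp only [hf]; gcongr; exact (hv' b).2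
    have h2 : -f a ≤ qu / Shat' a := by
      have hq : -deriv v a ≤ qu := by linarith [(hv' a).1]
      have he : -f a = -deriv v a / Shat' a := by simp [hf, neg_div]
      rw [he]
      gcongr
    linarith
  have hM : 0 < ∫ t in a..b, mhat' t :=
    intervalIntegral.intervalIntegral_pos_of_pos
      (hmhat'cont.intervalIntegrable a b) (fun x => hmhat'pos x) hab'
  rw [one_div, inv_mul_eq_div, lt_div_iff₀ hM]
  rw [hφint] at hkey
  linarith
end
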